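/- arXiv:1902.04251 — 7 statements merged into one kernel-verified Lean document; each statement's English description precedes it below -/
import Mathlib

section
/- Let φ : ℝ → ℝ be non-decreasing, μ ∈ ℝ, and define f_x(t) = max{t + φ(x), 0}. Then for all x ∈ ℝ, max{x + φ(x), 0} ≥ max{μ + φ(x), 0} + (x − μ)·𝟙{μ + φ(μ) ≥ 0}. -/
/-- Pointwise inequality: for non-decreasing `φ` and reals `x, μ`,
`max{x + φ(x), 0} ≥ max{μ + φ(x), 0} + (x − μ)·𝟙{μ + φ(μ) ≥ 0}`. -/
theorem stmt_1 (φ : ℝ → ℝ) (hφ : Monotone φ) (μ : ℝ) :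
    ∀ x : ℝ, max (x + φ x) 0 ≥ max (μ + φ x) 0 + (x - μ) * (if 0 ≤ μ + φ μ then (1:ℝ) else 0) := by
  intro x
  have hL1 : x + φ x ≤ max (x + φ x) 0 := le_max_left _ _
  have hL2 : (0:ℝ) ≤ max (x + φ x) 0 := le_max_right _ _
  split_ifs with h
  · rcases le_total μ x with hx | hx
    · have hm := hφ hx
      rcases le_total 0 (μ + φ x) with h2 | h2
      · rw [max_eq_left h2]; nlinarith
      · rw [max_eq_right h2]; nlinarith
    · have hm := hφ hx
      rcases le_total 0 (μ + φ x) with h2 | h2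
      · rw [max_eq_left h2]; nlinarith
      · rw [max_eq_right h2]; nlinarith
  · rcases le_total μ x with hx | hx
    · rcases le_total 0 (μ + φ x) with h2 | h2
      · rw [max_eq_left h2]; nlinarith
      · rw [max_eq_right h2]; nlinarith
    · have hm := hφ hx
      have : μ + φ x ≤ 0 := by linarith [le_of_not_ge h]
      rw [max_eq_right this]; nlinarith
end

section
/- On a probability space with sub-σ-field H ⊆ F, let φ(x, ω) : ℝ × Ω → ℝ be such that x ↦ φ(x, ω) is non-decreasing for each ω, and ω ↦ φ(x, ω) is H-measurable for each x. Then for an integrable random variable X, E[max{X + φ(X, ·), 0}] ≥ E[max{E[X|H] + φ(X, ·), 0}]. -/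
open MeasureTheory

lemma stmt_3_aux {Ω : Type*} (H : MeasurableSpace Ω) {F : MeasurableSpace Ω}
    (μ : Measure Ω) [IsProbabilityMeasure μ]
    (hH : H ≤ F)
    (φ : ℝ → Ω → ℝ)
    (hmono : ∀ ω, Monotone (fun x => φ x ω))
    (hmeas : ∀ x, Measurable[H] (φ x))
    (X : Ω → ℝ) (hX : Integrable X μ)
    (h1 : Integrable (fun ω => max (X ω + φ (X ω) ω) 0) μ)
    (h2 : Integrable (fun ω => max ((μ[X|H]) ω + φ (X ω) ω) 0) μ) :
    ∫ ω, max (X ω + φ (X ω) ω) 0 ∂μ ≥ ∫ ω, max ((μ[X|H]) ω + φ (X ω) ω) 0 ∂μ := by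
  set Y := μ[X|H] with hY
  set A : Set Ω := ⋃ q : ℚ, {ω | (q : ℝ) < Y ω ∧ 0 < Y ω + φ q ω} with hA
  have hYm : Measurable[H] Y := stronglyMeasurable_condExp.measurable
  have hAmeas : MeasurableSet[H] A := by
    refine MeasurableSet.iUnion fun q => ?_
    exact (measurableSet_lt measurable_const hYm).inter
      (measurableSet_lt measurable_const (hYm.add (hmeas q)))
  have hAF : MeasurableSet A := hH A hAmeas
  have key : ∀ ω, max (Y ω + φ (X ω) ω) 0 + A.indicator (fun ω => X ω - Y ω) ω
      ≤ max (X ω + φ (X ω) ω) 0 := by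
    intro ω
    by_cases hω : ω ∈ A
    · rw [Set.indicator_of_mem hω]
      rw [hA, Set.mem_iUnion] at hω
      obtain ⟨q, hq1, hq2⟩ := hω
      rcases le_or_gt (Y ω) (X ω) with hle | hlt
      · have hφ : φ (q : ℝ) ω ≤ φ (X ω) ω := hmono ω (le_of_lt (lt_of_lt_of_le hq1 hle))
        have hc : (0 : ℝ) < Y ω + φ (X ω) ω := by linarith
        rw [max_eq_left hc.le]
        linarith [le_max_left (X ω + φ (X ω) ω) (0 : ℝ)]
      · rcases le_total (Y ω + φ (X ω) ω) 0 with h | h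
        · rw [max_eq_right h]
          linarith [le_max_right (X ω + φ (X ω) ω) (0 : ℝ)]
        · rw [max_eq_left h]
          linarith [le_max_left (X ω + φ (X ω) ω) (0 : ℝ)]
    · rw [Set.indicator_of_notMem hω, add_zero]
      rcases le_or_gt (Y ω) (X ω) with hle | hlt
      · exact max_le_max (by linarith) le_rfl
      · have hbc : Y ω + φ (X ω) ω ≤ 0 := by
          by_contra h
          push_neg at h
          obtain ⟨q, hq1, hq2⟩ := exists_rat_btwn hlt
          have hφ : φ (X ω) ω ≤ φ (q : ℝ) ω := hmono ω hq1.le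
          exact hω (Set.mem_iUnion.2 ⟨q, hq2, by linarith⟩)
        rw [max_eq_right hbc]
        exact le_max_right _ _
  have hind : Integrable (A.indicator (fun ω => X ω - Y ω)) μ :=
    (hX.sub integrable_condExp).indicator hAF
  have hint : ∫ ω, A.indicator (fun ω => X ω - Y ω) ω ∂μ = 0 := by
    rw [integral_indicator hAF,
      integral_sub hX.integrableOn integrable_condExp.integrableOn,
      setIntegral_condExp hH hX hAmeas, sub_self]
  have hmain : ∫ ω, (max (Y ω + φ (X ω) ω) 0 + A.indicator (fun ω => X ω - Y ω) ω) ∂μ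
      ≤ ∫ ω, max (X ω + φ (X ω) ω) 0 ∂μ :=
    integral_mono (h2.add hind) h1 key
  rw [integral_add h2 hind, hint, add_zero] at hmain
  exact hmain

/-- Conditional variant of Jensen's inequality: if `x ↦ φ(x, ω)` is non-decreasing for
each `ω` and `ω ↦ φ(x, ω)` is `H`-measurable for each `x` (`H` a sub-σ-field), then
`E[max{X + φ(X, ·), 0}] ≥ E[max{E[X|H] + φ(X, ·), 0}]`. -/
theorem stmt_3 {Ω : Type*} {F : MeasurableSpace Ω} (μ : Measure Ω) [IsProbabilityMeasure μ]
    (H : MeasurableSpace Ω) (hH : H ≤ F)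
    (φ : ℝ → Ω → ℝ)
    (hmono : ∀ ω, Monotone (fun x => φ x ω))
    (hmeas : ∀ x, Measurable[H] (φ x))
    (X : Ω → ℝ) (hX : Integrable X μ)
    (h1 : Integrable (fun ω => max (X ω + φ (X ω) ω) 0) μ)
    (h2 : Integrable (fun ω => max ((μ[X|H]) ω + φ (X ω) ω) 0) μ) :
    ∫ ω, max (X ω + φ (X ω) ω) 0 ∂μ ≥ ∫ ω, max ((μ[X|H]) ω + φ (X ω) ω) 0 ∂μ :=
  stmt_3_aux H μ hH φ hmono hmeas X hX h1 h2
end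

section
/- Let H ⊆ F be a sub-σ-field, X an integrable random variable, C_0, …, C_T H-measurable integrable random variables, and n ∈ {0, …, T}. Then E[max_{0≤i≤T} {(i−n)⁺·X + C_i}] ≥ E[max_{0≤i≤T} {E[X|H]·𝟙{i ≥ n+1} + (i−n−1)⁺·X + C_i}]. -/
open MeasureTheory

private lemma key_real (x m A t s : ℝ) (h1 : x ≤ m → t ≤ s) (h2 : m ≤ x → s ≤ t) :
    max A (m + t) + (if A < m + s then x - m else 0) ≤ max A (x + t) := by
  have hA : A ≤ max A (x + t) := le_max_left _ _
  have hxt : x + t ≤ max A (x + t) := le_max_right _ _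
  split_ifs with hQ
  · rcases le_total x m with hxm | hmx
    · have hts := h1 hxm
      have hmax : max A (m + t) ≤ max A (x + t) + (m - x) := by
        apply max_le <;> linarith
      linarith
    · have hst := h2 hmx
      have hmt : A ≤ m + t := by linarith
      rw [max_eq_right hmt]
      linarith
  · have hsA : m + s ≤ A := not_lt.1 hQ
    rcases le_total x m with hxm | hmx
    · have hts := h1 hxm
      have : max A (m + t) = A := max_eq_left (by linarith)
      simp [this, hA]
    · have hst := h2 hmx
      have : max A (m + t) ≤ max A (x + t) := max_le hA (by linarith)
      linarith

private lemma S1_nonempty (T n : ℕ) :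
    (Finset.univ.filter (fun i : Fin (T + 1) => (i : ℕ) ≤ n)).Nonempty :=
  ⟨0, by simp⟩

private lemma S2_nonempty (T n : ℕ) (h : n < T) :
    (Finset.univ.filter (fun i : Fin (T + 1) => n + 1 ≤ (i : ℕ))).Nonempty :=
  ⟨⟨n + 1, by omega⟩, by simp⟩

/-- Generic decomposition of the supremum into the part with indices `≤ n` and `> n`. -/
private lemma decomp (T n : ℕ) (hn2 : n < T) (x y : ℝ) (c : Fin (T + 1) → ℝ) :
    Finset.univ.sup' Finset.univ_nonempty
        (fun i : Fin (T + 1) =>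
          (if n + 1 ≤ (i : ℕ) then y else 0) + (max ((i : ℝ) - n - 1) 0 * x + c i))
      = max ((Finset.univ.filter (fun i : Fin (T + 1) => (i : ℕ) ≤ n)).sup'
              (S1_nonempty T n) c)
          (y + (Finset.univ.filter (fun i : Fin (T + 1) => n + 1 ≤ (i : ℕ))).sup'
              (S2_nonempty T n hn2)
              (fun i => max ((i : ℝ) - n - 1) 0 * x + c i)) := by
  apply le_antisymm
  · apply Finset.sup'_le
    intro i _
    by_cases hi : (i : ℕ) ≤ n
    · have hir : (i : ℝ) ≤ (n : ℝ) := by exact_mod_cast hi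
      have h0 : max ((i : ℝ) - n - 1) 0 = 0 := max_eq_right (by linarith)
      rw [if_neg (by omega), h0]
      have : c i ≤ (Finset.univ.filter (fun i : Fin (T + 1) => (i : ℕ) ≤ n)).sup'
          (S1_nonempty T n) c :=
        Finset.le_sup' c (Finset.mem_filter.mpr ⟨Finset.mem_univ i, hi⟩)
      have := le_max_left ((Finset.univ.filter (fun i : Fin (T + 1) => (i : ℕ) ≤ n)).sup'
          (S1_nonempty T n) c)
          (y + (Finset.univ.filter (fun i : Fin (T + 1) => n + 1 ≤ (i : ℕ))).sup'
              (S2_nonempty T n hn2)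
              (fun i => max ((i : ℝ) - n - 1) 0 * x + c i))
      linarith
    · have hi' : n + 1 ≤ (i : ℕ) := by omega
      rw [if_pos hi']
      have : max ((i : ℝ) - n - 1) 0 * x + c i
          ≤ (Finset.univ.filter (fun i : Fin (T + 1) => n + 1 ≤ (i : ℕ))).sup'
              (S2_nonempty T n hn2)
              (fun i => max ((i : ℝ) - n - 1) 0 * x + c i) :=
        Finset.le_sup' (fun i : Fin (T + 1) => max ((i : ℝ) - n - 1) 0 * x + c i)
          (Finset.mem_filter.mpr ⟨Finset.mem_univ i, hi'⟩)
      have := le_max_right ((Finset.univ.filter (fun i : Fin (T + 1) => (i : ℕ) ≤ n)).sup'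
          (S1_nonempty T n) c)
          (y + (Finset.univ.filter (fun i : Fin (T + 1) => n + 1 ≤ (i : ℕ))).sup'
              (S2_nonempty T n hn2)
              (fun i => max ((i : ℝ) - n - 1) 0 * x + c i))
      linarith
  · apply max_le
    · apply Finset.sup'_le
      intro i hi
      have hi' : (i : ℕ) ≤ n := by simpa using hi
      have hir : (i : ℝ) ≤ (n : ℝ) := by exact_mod_cast hi'
      have h0 : max ((i : ℝ) - n - 1) 0 = 0 := max_eq_right (by linarith)
      have : (if n + 1 ≤ (i : ℕ) then y else 0) + (max ((i : ℝ) - n - 1) 0 * x + c i)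
          ≤ Finset.univ.sup' Finset.univ_nonempty
            (fun i : Fin (T + 1) =>
              (if n + 1 ≤ (i : ℕ) then y else 0) + (max ((i : ℝ) - n - 1) 0 * x + c i)) :=
        Finset.le_sup' (fun i : Fin (T + 1) =>
          (if n + 1 ≤ (i : ℕ) then y else 0) + (max ((i : ℝ) - n - 1) 0 * x + c i))
          (Finset.mem_univ i)
      rw [if_neg (by omega), h0] at this
      linarith
    · have hkey : (Finset.univ.filter (fun i : Fin (T + 1) => n + 1 ≤ (i : ℕ))).sup'
          (S2_nonempty T n hn2) (fun i => max ((i : ℝ) - n - 1) 0 * x + c i)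
          ≤ Finset.univ.sup' Finset.univ_nonempty
            (fun i : Fin (T + 1) =>
              (if n + 1 ≤ (i : ℕ) then y else 0) + (max ((i : ℝ) - n - 1) 0 * x + c i)) - y := by
        apply Finset.sup'_le
        intro i hi
        have hi' : n + 1 ≤ (i : ℕ) := by simpa using hi
        have : (if n + 1 ≤ (i : ℕ) then y else 0) + (max ((i : ℝ) - n - 1) 0 * x + c i)
            ≤ Finset.univ.sup' Finset.univ_nonempty
              (fun i : Fin (T + 1) =>
                (if n + 1 ≤ (i : ℕ) then y else 0) + (max ((i : ℝ) - n - 1) 0 * x + c i)) :=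
          Finset.le_sup' (fun i : Fin (T + 1) =>
            (if n + 1 ≤ (i : ℕ) then y else 0) + (max ((i : ℝ) - n - 1) 0 * x + c i))
            (Finset.mem_univ i)
        rw [if_pos hi'] at this
        linarith
      linarith

/-- Corollary of the conditional Jensen variant: for a sub-σ-field `H`, an integrable `X`,
`H`-measurable integrable `C_0, …, C_T` and `n ≤ T`,
`E[max_{0≤i≤T} {(i−n)⁺·X + C_i}]
  ≥ E[max_{0≤i≤T} {E[X|H]·𝟙{i ≥ n+1} + (i−n−1)⁺·X + C_i}]`. -/
theorem stmt_4 {Ω : Type*} {F : MeasurableSpace Ω} (μ : Measure Ω) [IsProbabilityMeasure μ]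
    (H : MeasurableSpace Ω) (hH : H ≤ F)
    (T : ℕ) (X : Ω → ℝ) (hX : Integrable X μ)
    (C : Fin (T + 1) → Ω → ℝ)
    (hCmeas : ∀ i, Measurable[H] (C i))
    (hCint : ∀ i, Integrable (C i) μ)
    (n : ℕ) (hn : n ≤ T)
    (h1 : Integrable (fun ω =>
      Finset.univ.sup' Finset.univ_nonempty
        (fun i : Fin (T + 1) => max ((i : ℝ) - n) 0 * X ω + C i ω)) μ)
    (h2 : Integrable (fun ω =>
      Finset.univ.sup' Finset.univ_nonempty
        (fun i : Fin (T + 1) =>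
          (μ[X|H]) ω * (if n + 1 ≤ (i : ℕ) then (1:ℝ) else 0)
            + max ((i : ℝ) - n - 1) 0 * X ω + C i ω)) μ) :
    ∫ ω, Finset.univ.sup' Finset.univ_nonempty
        (fun i : Fin (T + 1) => max ((i : ℝ) - n) 0 * X ω + C i ω) ∂μ
      ≥ ∫ ω, Finset.univ.sup' Finset.univ_nonempty
        (fun i : Fin (T + 1) =>
          (μ[X|H]) ω * (if n + 1 ≤ (i : ℕ) then (1:ℝ) else 0)
            + max ((i : ℝ) - n - 1) 0 * X ω + C i ω) ∂μ := by
  rcases eq_or_lt_of_le hn with rfl | hn2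
  · -- trivial case `n = T`: both integrands coincide
    refine ge_of_eq (integral_congr_ae (Filter.Eventually.of_forall fun ω => ?_))
    apply Finset.sup'_congr _ rfl
    intro i _
    have hi : (i : ℕ) ≤ n := Nat.lt_succ_iff.mp i.isLt
    have hir : (i : ℝ) ≤ (n : ℝ) := by exact_mod_cast hi
    rw [max_eq_right (by linarith : (i : ℝ) - n ≤ 0),
      max_eq_right (by linarith : (i : ℝ) - n - 1 ≤ 0), if_neg (by omega)]
    ring
  · -- main case `n < T`
    set e : Ω → ℝ := μ[X|H] with he_def
    set S1 : Finset (Fin (T + 1)) := Finset.univ.filter (fun i : Fin (T + 1) => (i : ℕ) ≤ n)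
      with hS1_def
    set S2 : Finset (Fin (T + 1)) := Finset.univ.filter (fun i : Fin (T + 1) => n + 1 ≤ (i : ℕ))
      with hS2_def
    set A : Ω → ℝ := fun ω => S1.sup' (S1_nonempty T n) (fun i => C i ω) with hA_def
    set φ : ℝ → Ω → ℝ := fun x ω =>
      S2.sup' (S2_nonempty T n hn2) (fun i => max ((i : ℝ) - n - 1) 0 * x + C i ω) with hφ_def
    have he_meas : Measurable[H] e := stronglyMeasurable_condExp.measurable
    have hA_meas : Measurable[H] A := by
      have hEq : A = S1.sup' (S1_nonempty T n) C :=
        funext fun ω => (Finset.sup'_apply (S1_nonempty T n) C ω).symm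
      rw [hEq]
      exact Finset.measurable_sup' (S1_nonempty T n) (fun i _ => hCmeas i)
    have hφe_meas : Measurable[H] (fun ω => e ω + φ (e ω) ω) := by
      apply he_meas.add
      set g : Fin (T + 1) → Ω → ℝ :=
        fun i ω => max ((i : ℝ) - n - 1) 0 * e ω + C i ω with hg_def
      have hEq : (fun ω => φ (e ω) ω) = S2.sup' (S2_nonempty T n hn2) g :=
        funext fun ω => (Finset.sup'_apply (S2_nonempty T n hn2) g ω).symm
      rw [hEq]
      exact Finset.measurable_sup' (S2_nonempty T n hn2)
        (fun i _ => ((he_meas.const_mul _).add (hCmeas i)))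
    set Q : Set Ω := {ω | A ω < e ω + φ (e ω) ω} with hQ_def
    have hQ_measH : MeasurableSet[H] Q := measurableSet_lt hA_meas hφe_meas
    letI : MeasurableSpace Ω := F
    have hQ_meas : MeasurableSet[F] Q := hH _ hQ_measH
    set D : Ω → ℝ := Q.indicator (fun ω => X ω - e ω) with hD_def
    have hD_int : Integrable D μ := by
      rw [hD_def]
      exact Integrable.indicator (hX.sub integrable_condExp) hQ_meas
    have hD_zero : ∫ ω, D ω ∂μ = 0 := by
      rw [hD_def, integral_indicator (f := fun ω => X ω - e ω) hQ_meas,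
        integral_sub hX.integrableOn integrable_condExp.integrableOn,
        setIntegral_condExp hH hX hQ_measH, sub_self]
    -- monotonicity of φ
    have hφ_mono : ∀ ω : Ω, ∀ x m : ℝ, x ≤ m → φ x ω ≤ φ m ω := by
      intro ω x m hxm
      apply Finset.sup'_le
      intro i hi
      have h1 : max ((i : ℝ) - n - 1) 0 * x ≤ max ((i : ℝ) - n - 1) 0 * m :=
        mul_le_mul_of_nonneg_left hxm (le_max_right _ _)
      have h2 : max ((i : ℝ) - n - 1) 0 * m + C i ω ≤ φ m ω :=
        Finset.le_sup' (fun i : Fin (T + 1) => max ((i : ℝ) - n - 1) 0 * m + C i ω) hi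
      linarith
    -- pointwise inequality
    have hpt : ∀ ω, (Finset.univ.sup' Finset.univ_nonempty
        (fun i : Fin (T + 1) =>
          (μ[X|H]) ω * (if n + 1 ≤ (i : ℕ) then (1:ℝ) else 0)
            + max ((i : ℝ) - n - 1) 0 * X ω + C i ω)) + D ω
        ≤ Finset.univ.sup' Finset.univ_nonempty
          (fun i : Fin (T + 1) => max ((i : ℝ) - n) 0 * X ω + C i ω) := by
      intro ω
      have hL : (Finset.univ.sup' Finset.univ_nonempty
          (fun i : Fin (T + 1) => max ((i : ℝ) - n) 0 * X ω + C i ω))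
          = max (A ω) (X ω + φ (X ω) ω) := by
        rw [hA_def, hφ_def]
        rw [show (fun i : Fin (T + 1) => max ((i : ℝ) - n) 0 * X ω + C i ω)
            = fun i : Fin (T + 1) =>
              (if n + 1 ≤ (i : ℕ) then X ω else 0)
                + (max ((i : ℝ) - n - 1) 0 * X ω + C i ω) from ?_]
        · exact decomp T n hn2 (X ω) (X ω) (fun i => C i ω)
        · funext i
          by_cases hi : n + 1 ≤ (i : ℕ)
          · have hir : (n : ℝ) + 1 ≤ (i : ℝ) := by exact_mod_cast hi
            rw [if_pos hi, max_eq_left (by linarith), max_eq_left (by linarith)]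
            ring
          · have hi' : (i : ℕ) ≤ n := by omega
            have hir : (i : ℝ) ≤ (n : ℝ) := by exact_mod_cast hi'
            rw [if_neg hi, max_eq_right (by linarith), max_eq_right (by linarith)]
            ring
      have hR : (Finset.univ.sup' Finset.univ_nonempty
          (fun i : Fin (T + 1) =>
            (μ[X|H]) ω * (if n + 1 ≤ (i : ℕ) then (1:ℝ) else 0)
              + max ((i : ℝ) - n - 1) 0 * X ω + C i ω))
          = max (A ω) (e ω + φ (X ω) ω) := by
        rw [hA_def, hφ_def]
        rw [show (fun i : Fin (T + 1) =>
            (μ[X|H]) ω * (if n + 1 ≤ (i : ℕ) then (1:ℝ) else 0)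
              + max ((i : ℝ) - n - 1) 0 * X ω + C i ω)
            = fun i : Fin (T + 1) =>
              (if n + 1 ≤ (i : ℕ) then e ω else 0)
                + (max ((i : ℝ) - n - 1) 0 * X ω + C i ω) from ?_]
        · exact decomp T n hn2 (X ω) (e ω) (fun i => C i ω)
        · funext i
          rw [he_def]
          split_ifs <;> ring
      rw [hL, hR]
      have hDω : D ω = if A ω < e ω + φ (e ω) ω then X ω - e ω else 0 := by
        rw [hD_def, Set.indicator_apply]
        simp [hQ_def]
      rw [hDω]
      exact key_real (X ω) (e ω) (A ω) (φ (X ω) ω) (φ (e ω) ω)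
        (fun h => hφ_mono ω _ _ h) (fun h => hφ_mono ω _ _ h)
    have hmono : ∫ ω, ((Finset.univ.sup' Finset.univ_nonempty
        (fun i : Fin (T + 1) =>
          (μ[X|H]) ω * (if n + 1 ≤ (i : ℕ) then (1:ℝ) else 0)
            + max ((i : ℝ) - n - 1) 0 * X ω + C i ω)) + D ω) ∂μ
        ≤ ∫ ω, Finset.univ.sup' Finset.univ_nonempty
          (fun i : Fin (T + 1) => max ((i : ℝ) - n) 0 * X ω + C i ω) ∂μ :=
      integral_mono (h2.add hD_int) h1 hpt
    rw [integral_add h2 hD_int, hD_zero, add_zero] at hmono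
    exact hmono
end

section
/- If θ ~ Beta(α, β) and, conditionally on θ, R_1, R_2, … are i.i.d. Bernoulli(θ), then the posterior mean μ_n = (α + Σ_{s=1}^n R_s)/(α + β + n) is a c-sub-Gaussian random variable with c = n / (4(α+β)(α+β+n)); that is, E[exp(λ(μ_n − E[μ_n]))] ≤ exp(λ²·n / (8(α+β)(α+β+n))) for all λ ∈ ℝ. -/
open MeasureTheory Real

/-- The Beta(α, β) probability measure on `ℝ`, defined by its density
`x^(α−1)(1−x)^(β−1) / B(α,β)` on `(0,1)`. -/
noncomputable def betaMeasure (a b : ℝ) : Measure ℝ :=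
  volume.withDensity fun x =>
    ENNReal.ofReal
      (Set.indicator (Set.Ioo (0:ℝ) 1)
        (fun y => y ^ (a - 1) * (1 - y) ^ (b - 1)
          / (∫ z in Set.Ioo (0:ℝ) 1, z ^ (a - 1) * (1 - z) ^ (b - 1))) x)

/-- The Bernoulli(θ) measure on `ℝ` (mass θ at 1 and 1−θ at 0). -/
noncomputable def bernoulliMeasure (θ : ℝ) : Measure ℝ :=
  (ENNReal.ofReal θ) • Measure.dirac 1 + (ENNReal.ofReal (1 - θ)) • Measure.dirac 0

/-- The joint law of `n` observations in the Beta-Bernoulli model: draw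
`θ ~ Beta(α,β)` and, conditionally on `θ`, observe `n` i.i.d. Bernoulli(θ) rewards. -/
noncomputable def betaBernoulli (a b : ℝ) (n : ℕ) : Measure (Fin n → ℝ) :=
  (betaMeasure a b).bind fun θ => Measure.pi fun _ : Fin n => bernoulliMeasure θ

/-! Write `S_n = R_1 + ⋯ + R_n`. Given `θ`, `E[e^{t S_n} | θ] = (1 - θ + θ e^t)^n`. Peeling off
one factor, the weights `1 - θ` and `θ` turn the `Beta(a, b)` density into `b/(a+b)` times the
`Beta(a, b+1)` density and `a/(a+b)` times the `Beta(a+1, b)` density: the posteriors after one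
observation. This gives a recursion for `E[e^{t S_n}]` in `n`, along which the bound
`E[e^{t S_n}] ≤ exp(t n a/(a+b) + t² n (a+b+n) / (8(a+b)))` propagates by induction, each step
being Hoeffding's lemma for a Bernoulli(`a/(a+b)`) variable. Substituting `t = λ/(a+b+n)` gives
the theorem. -/

open Set
open scoped ENNReal

lemma one_sub_add_mul_exp_le {p : ℝ} (hp0 : 0 ≤ p) (hp1 : p ≤ 1) (u : ℝ) :
    1 - p + p * exp u ≤ exp (p * u + u ^ 2 / 8) := by
  have hoeffding := (ProbabilityTheory.hasSubgaussianMGF_of_mem_Icc (X := id)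
    (μ := ProbabilityTheory.bernoulliMeasure (1 : ℝ) 0 ⟨p, hp0, hp1⟩) (a := 0) (b := 1)
    measurable_id.aemeasurable ?_).mgf_le u
  · simp only [ProbabilityTheory.mgf, ProbabilityTheory.integral_bernoulliMeasure] at hoeffding
    norm_num at hoeffding
    have h1 : exp (p * u) * exp (u * (1 - p)) = exp u := by rw [← exp_add]; ring_nf
    have h0 : exp (p * u) * exp (-(u * p)) = 1 := by
      rw [← exp_add, show p * u + -(u * p) = 0 by ring, exp_zero]
    calc 1 - p + p * exp u
        = exp (p * u) * (p * exp (u * (1 - p)) + (1 - p) * exp (-(u * p))) := by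
          linear_combination -p * h1 - (1 - p) * h0
      _ ≤ exp (p * u) * exp (u ^ 2 / 8) := by
          gcongr
          exact hoeffding.trans_eq (by ring_nf)
      _ = exp (p * u + u ^ 2 / 8) := (exp_add _ _).symm
  · rw [ProbabilityTheory.bernoulliMeasure_def, ae_add_measure_iff]
    exact ⟨Measure.ae_smul_measure ((ae_dirac_iff measurableSet_Icc).2 (by simp)) _,
      Measure.ae_smul_measure ((ae_dirac_iff measurableSet_Icc).2 (by simp)) _⟩

lemma Measurable.measure_pi {α ι : Type*} [MeasurableSpace α] [Fintype ι] {β : ι → Type*}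
    [∀ i, MeasurableSpace (β i)] {μ : (i : ι) → α → Measure (β i)}
    [∀ i x, IsFiniteMeasure (μ i x)] (hμ : ∀ i, Measurable (μ i)) :
    Measurable fun x ↦ Measure.pi fun i ↦ μ i x := by
  have h_box : ∀ s : (i : ι) → Set (β i), (∀ i, MeasurableSet (s i)) →
      Measurable fun x ↦ Measure.pi (fun i ↦ μ i x) (univ.pi s) := fun s hs ↦ by
    simp_rw [Measure.pi_pi]
    exact Finset.measurable_prod _ fun i _ ↦ (Measure.measurable_coe (hs i)).comp (hμ i)
  refine .measure_of_isPiSystem generateFrom_pi.symm isPiSystem_pi ?_ ?_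
  · rintro _ ⟨s, hs, rfl⟩
    exact h_box s fun i ↦ hs i (mem_univ i)
  · simpa using h_box (fun _ ↦ univ) fun _ ↦ MeasurableSet.univ

lemma lintegral_fin_prod_eq_pow {α : Type*} [MeasurableSpace α] {n : ℕ} (μ : Measure α)
    [SigmaFinite μ] {g : α → ℝ≥0∞} (hg : Measurable g) :
    ∫⁻ x : Fin n → α, ∏ i, g (x i) ∂(Measure.pi fun _ ↦ μ) = (∫⁻ x, g x ∂μ) ^ n := by
  induction n with
  | zero => simp
  | succ n ih =>
    rw [← ((measurePreserving_piFinSuccAbove (fun _ : Fin (n + 1) ↦ μ) 0).symm).lintegral_comp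
      (by fun_prop)]
    simp_rw [MeasurableEquiv.piFinSuccAbove_symm_apply, Fin.insertNthEquiv,
      Fin.prod_univ_succ, Fin.insertNth_zero]
    simp only [cast_eq, Fin.cons_zero, Fin.cons_succ, Equiv.coe_fn_mk]
    rw [lintegral_prod_mul (g := fun y : Fin n → α ↦ ∏ i, g (y i)) hg.aemeasurable
      (Finset.measurable_prod _ fun i _ ↦ hg.comp (measurable_pi_apply i)).aemeasurable, ih,
      pow_succ']

namespace ProbabilityTheory

variable {a b : ℝ}

lemma setIntegral_Ioo_rpow_mul_one_sub_rpow (ha : 0 < a) (hb : 0 < b) :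
    ∫ x in Ioo (0 : ℝ) 1, x ^ (a - 1) * (1 - x) ^ (b - 1) = beta a b := by
  have hconv := Complex.betaIntegral_convergent (u := a) (v := b) (by simpa) (by simpa)
  rw [intervalIntegrable_iff_integrableOn_Ioc_of_le zero_le_one] at hconv
  rw [beta_eq_betaIntegralReal a b ha hb, Complex.betaIntegral,
    intervalIntegral.integral_of_le zero_le_one, integral_Ioc_eq_integral_Ioo,
    ← RCLike.re_to_complex, ← integral_re (hconv.mono_set Ioo_subset_Ioc_self)]
  refine setIntegral_congr_fun measurableSet_Ioo fun x ⟨hx0, hx1⟩ ↦ ?_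
  norm_cast
  rw [← Complex.ofReal_cpow hx0.le, ← Complex.ofReal_cpow (by linarith), RCLike.re_to_complex,
    ← Complex.ofReal_mul, Complex.ofReal_re]

lemma beta_comm (a b : ℝ) : beta a b = beta b a := by
  rw [beta, beta, mul_comm, add_comm]

lemma beta_add_one_left (ha : 0 < a) (hb : 0 < b) :
    beta (a + 1) b = a / (a + b) * beta a b := by
  rw [beta, beta, add_right_comm, Real.Gamma_add_one ha.ne', Real.Gamma_add_one (by positivity)]
  field_simp

lemma beta_add_one_right (ha : 0 < a) (hb : 0 < b) :
    beta a (b + 1) = b / (a + b) * beta a b := by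
  rw [beta_comm, beta_add_one_left hb ha, add_comm, beta_comm]

lemma ofReal_mul_betaPDF (ha : 0 < a) (hb : 0 < b) (x : ℝ) :
    ENNReal.ofReal x * betaPDF a b x = ENNReal.ofReal (a / (a + b)) * betaPDF (a + 1) b x := by
  rw [betaPDF_eq, betaPDF_eq]
  split_ifs with hx
  · obtain ⟨hx0, hx1⟩ := hx
    rw [← ENNReal.ofReal_mul hx0.le, ← ENNReal.ofReal_mul (by positivity),
      beta_add_one_left ha hb, add_sub_cancel_right, rpow_sub_one hx0.ne']
    congr 1
    field_simp
  · simp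

lemma ofReal_one_sub_mul_betaPDF (ha : 0 < a) (hb : 0 < b) (x : ℝ) :
    ENNReal.ofReal (1 - x) * betaPDF a b x
      = ENNReal.ofReal (b / (a + b)) * betaPDF a (b + 1) x := by
  rw [betaPDF_eq, betaPDF_eq]
  split_ifs with hx
  · obtain ⟨hx0, hx1⟩ := hx
    have hx1' : 1 - x ≠ 0 := (sub_pos.2 hx1).ne'
    rw [← ENNReal.ofReal_mul (by linarith), ← ENNReal.ofReal_mul (by positivity),
      beta_add_one_right ha hb, add_sub_cancel_right, rpow_sub_one hx1']
    congr 1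
    field_simp
  · simp

@[fun_prop]
lemma measurable_betaPDF (a b : ℝ) : Measurable (betaPDF a b) :=
  ENNReal.measurable_ofReal.comp (measurable_betaPDFReal a b)

lemma lintegral_ofReal_mul_betaMeasure (ha : 0 < a) (hb : 0 < b) {f : ℝ → ℝ≥0∞}
    (hf : Measurable f) :
    ∫⁻ x, ENNReal.ofReal x * f x ∂betaMeasure a b
      = ENNReal.ofReal (a / (a + b)) * ∫⁻ x, f x ∂betaMeasure (a + 1) b := by
  rw [betaMeasure, betaMeasure, lintegral_withDensity_eq_lintegral_mul _ (by fun_prop)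
    (by fun_prop), lintegral_withDensity_eq_lintegral_mul _ (by fun_prop) hf,
    ← lintegral_const_mul _ (by fun_prop)]
  congr 1 with x
  simp only [Pi.mul_apply]
  rw [← mul_assoc, mul_comm (betaPDF a b x), ofReal_mul_betaPDF ha hb, mul_assoc]

lemma lintegral_ofReal_one_sub_mul_betaMeasure (ha : 0 < a) (hb : 0 < b) {f : ℝ → ℝ≥0∞}
    (hf : Measurable f) :
    ∫⁻ x, ENNReal.ofReal (1 - x) * f x ∂betaMeasure a b
      = ENNReal.ofReal (b / (a + b)) * ∫⁻ x, f x ∂betaMeasure a (b + 1) := by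
  rw [betaMeasure, betaMeasure, lintegral_withDensity_eq_lintegral_mul _ (by fun_prop)
    (by fun_prop), lintegral_withDensity_eq_lintegral_mul _ (by fun_prop) hf,
    ← lintegral_const_mul _ (by fun_prop)]
  congr 1 with x
  simp only [Pi.mul_apply]
  rw [← mul_assoc, mul_comm (betaPDF a b x), ofReal_one_sub_mul_betaPDF ha hb, mul_assoc]

end ProbabilityTheory

lemma betaMeasure_eq_withDensity_betaPDF {a b : ℝ} (ha : 0 < a) (hb : 0 < b) :
    betaMeasure a b = volume.withDensity (ProbabilityTheory.betaPDF a b) := by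
  rw [betaMeasure, ProbabilityTheory.setIntegral_Ioo_rpow_mul_one_sub_rpow ha hb]
  congr 1 with x
  rw [ProbabilityTheory.betaPDF, ProbabilityTheory.betaPDFReal, indicator]
  simp only [mem_Ioo]
  split_ifs <;> simp [div_eq_inv_mul, mul_assoc]

instance (θ : ℝ) : IsFiniteMeasure (bernoulliMeasure θ) :=
  ⟨by simp [bernoulliMeasure]⟩

lemma measurable_bernoulliMeasure : Measurable bernoulliMeasure :=
  Measure.measurable_of_measurable_coe _ fun s _ ↦ by
    simp only [bernoulliMeasure, Measure.add_apply, Measure.smul_apply, smul_eq_mul]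
    fun_prop

lemma lintegral_exp_mul_bernoulliMeasure (θ t : ℝ) :
    ∫⁻ x, ENNReal.ofReal (exp (t * x)) ∂bernoulliMeasure θ
      = ENNReal.ofReal (1 - θ) + ENNReal.ofReal θ * ENNReal.ofReal (exp t) := by
  simp [bernoulliMeasure, lintegral_add_measure, add_comm]

lemma lintegral_exp_mul_sum_betaBernoulli (a b t : ℝ) (n : ℕ) :
    ∫⁻ R, ENNReal.ofReal (exp (t * ∑ s, R s)) ∂betaBernoulli a b n
      = ∫⁻ θ, (ENNReal.ofReal (1 - θ) + ENNReal.ofReal θ * ENNReal.ofReal (exp t)) ^ n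
          ∂betaMeasure a b := by
  rw [betaBernoulli, Measure.lintegral_bind
    (Measurable.measure_pi fun _ ↦ measurable_bernoulliMeasure).aemeasurable (by fun_prop)]
  congr 1 with θ
  have hprod : ∀ R : Fin n → ℝ,
      ENNReal.ofReal (exp (t * ∑ s, R s)) = ∏ s, ENNReal.ofReal (exp (t * R s)) := fun R ↦ by
    rw [Finset.mul_sum, exp_sum, ENNReal.ofReal_prod_of_nonneg fun _ _ ↦ (exp_pos _).le]
  simp_rw [hprod]
  rw [lintegral_fin_prod_eq_pow (g := fun x ↦ ENNReal.ofReal (exp (t * x))) _ (by fun_prop),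
    lintegral_exp_mul_bernoulliMeasure]

/-- `t E[S_n] + (t² / 2) σ²` with `σ² = n (a+b+n) / (4(a+b))`, the sub-Gaussian variance proxy
of `S_n = R_1 + ⋯ + R_n` under the prior `Beta(a, b)`. -/
noncomputable def sumCgfBound (t : ℝ) (n : ℕ) (a b : ℝ) : ℝ :=
  t * n * a / (a + b) + t ^ 2 * n * (a + b + n) / (8 * (a + b))

lemma sumCgfBound_step (t : ℝ) (n : ℕ) {a b : ℝ} (ha : 0 < a) (hb : 0 < b) :
    b / (a + b) * exp (sumCgfBound t n a (b + 1))
        + exp t * (a / (a + b) * exp (sumCgfBound t n (a + 1) b))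
      ≤ exp (sumCgfBound t (n + 1) a b) := by
  have hc : 0 < a + b := by positivity
  set p := a / (a + b)
  -- the gap between the exponents after observing `R_1 = 1` and after observing `R_1 = 0`
  set u := t * (a + b + 1 + n) / (a + b + 1)
  have hshift : sumCgfBound t n (a + 1) b + t = sumCgfBound t n a (b + 1) + u := by
    simp only [sumCgfBound, u]
    field_simp
    ring
  have hgap : sumCgfBound t (n + 1) a b - (sumCgfBound t n a (b + 1) + (p * u + u ^ 2 / 8))
      = t ^ 2 * (a + b + n + 1) ^ 2 / (8 * (a + b) * (a + b + 1) ^ 2) := by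
    simp only [sumCgfBound, p, u]
    push_cast
    field_simp
    ring
  calc b / (a + b) * exp (sumCgfBound t n a (b + 1))
        + exp t * (p * exp (sumCgfBound t n (a + 1) b))
      = exp (sumCgfBound t n a (b + 1)) * (1 - p + p * exp u) := by
        rw [← mul_assoc, mul_comm (exp t), mul_assoc, ← exp_add, add_comm t, hshift, exp_add,
          show b / (a + b) = 1 - p by simp only [p]; field_simp; ring]
        ring
    _ ≤ exp (sumCgfBound t n a (b + 1)) * exp (p * u + u ^ 2 / 8) := by
        gcongr
        exact one_sub_add_mul_exp_le (by positivity) (div_le_one_of_le₀ (by linarith) hc.le) u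
    _ ≤ exp (sumCgfBound t (n + 1) a b) := by
        rw [← exp_add, exp_le_exp]
        have : 0 ≤ t ^ 2 * (a + b + n + 1) ^ 2 / (8 * (a + b) * (a + b + 1) ^ 2) := by positivity
        linarith

lemma lintegral_mgf_pow_betaMeasure_le (t : ℝ) (n : ℕ) {a b : ℝ} (ha : 0 < a) (hb : 0 < b) :
    ∫⁻ θ, (ENNReal.ofReal (1 - θ) + ENNReal.ofReal θ * ENNReal.ofReal (exp t)) ^ n
        ∂ProbabilityTheory.betaMeasure a b
      ≤ ENNReal.ofReal (exp (sumCgfBound t n a b)) := by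
  induction n generalizing a b with
  | zero =>
    have := ProbabilityTheory.isProbabilityMeasureBeta ha hb
    simp [sumCgfBound]
  | succ n ih =>
    set g : ℝ → ℝ≥0∞ := fun θ ↦
      (ENNReal.ofReal (1 - θ) + ENNReal.ofReal θ * ENNReal.ofReal (exp t)) ^ n
    have hg : Measurable g := by fun_prop
    calc ∫⁻ θ, (ENNReal.ofReal (1 - θ) + ENNReal.ofReal θ * ENNReal.ofReal (exp t)) ^ (n + 1)
          ∂ProbabilityTheory.betaMeasure a b
        = ∫⁻ θ, ENNReal.ofReal (1 - θ) * g θ + ENNReal.ofReal (exp t) * (ENNReal.ofReal θ * g θ)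
          ∂ProbabilityTheory.betaMeasure a b := by
          congr 1 with θ
          ring
      _ = ENNReal.ofReal (b / (a + b)) * ∫⁻ θ, g θ ∂ProbabilityTheory.betaMeasure a (b + 1)
          + ENNReal.ofReal (exp t) * (ENNReal.ofReal (a / (a + b))
            * ∫⁻ θ, g θ ∂ProbabilityTheory.betaMeasure (a + 1) b) := by
          rw [lintegral_add_left (by fun_prop), lintegral_const_mul _ (by fun_prop),
            ProbabilityTheory.lintegral_ofReal_one_sub_mul_betaMeasure ha hb hg,
            ProbabilityTheory.lintegral_ofReal_mul_betaMeasure ha hb hg]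
      _ ≤ ENNReal.ofReal (b / (a + b)) * ENNReal.ofReal (exp (sumCgfBound t n a (b + 1)))
          + ENNReal.ofReal (exp t) * (ENNReal.ofReal (a / (a + b))
            * ENNReal.ofReal (exp (sumCgfBound t n (a + 1) b))) := by
          gcongr
          exacts [ih ha (by positivity), ih (by positivity) hb]
      _ = ENNReal.ofReal (b / (a + b) * exp (sumCgfBound t n a (b + 1))
          + exp t * (a / (a + b) * exp (sumCgfBound t n (a + 1) b))) := by
          rw [ENNReal.ofReal_add (by positivity) (by positivity),
            ENNReal.ofReal_mul (by positivity), ENNReal.ofReal_mul (by positivity),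
            ENNReal.ofReal_mul (by positivity)]
      _ ≤ ENNReal.ofReal (exp (sumCgfBound t (n + 1) a b)) :=
          ENNReal.ofReal_le_ofReal (sumCgfBound_step t n ha hb)

lemma integral_exp_mul_sum_betaBernoulli_le (t : ℝ) (n : ℕ) {a b : ℝ} (ha : 0 < a) (hb : 0 < b) :
    ∫ R, exp (t * ∑ s, R s) ∂betaBernoulli a b n ≤ exp (sumCgfBound t n a b) := by
  rw [integral_eq_lintegral_of_nonneg_ae (.of_forall fun _ ↦ (exp_pos _).le) (by fun_prop)]
  refine ENNReal.toReal_le_of_le_ofReal (exp_pos _).le ?_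
  rw [lintegral_exp_mul_sum_betaBernoulli, betaMeasure_eq_withDensity_betaPDF ha hb]
  exact lintegral_mgf_pow_betaMeasure_le t n ha hb

/-- In the Beta-Bernoulli model, the posterior mean
`μ_n = (α + Σ_{s=1}^n R_s)/(α + β + n)` is `n/(4(α+β)(α+β+n))`-sub-Gaussian around its
mean `α/(α+β)`:
`E[exp(λ(μ_n − E[μ_n]))] ≤ exp(λ²·n/(8(α+β)(α+β+n)))` for all `λ ∈ ℝ`. -/
theorem stmt_5 (a b : ℝ) (ha : 0 < a) (hb : 0 < b) (n : ℕ) :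
    ∀ lam : ℝ,
      ∫ R, Real.exp (lam * ((a + ∑ s, R s) / (a + b + n) - a / (a + b)))
          ∂(betaBernoulli a b n)
        ≤ Real.exp (lam ^ 2 * n / (8 * (a + b) * (a + b + n))) := by
  intro lam
  set t := lam / (a + b + n)
  set shift := lam * a / (a + b + n) - lam * a / (a + b)
  have hexponent : ∀ R : Fin n → ℝ,
      lam * ((a + ∑ s, R s) / (a + b + n) - a / (a + b)) = shift + t * ∑ s, R s := fun R ↦ by
    simp only [shift, t]; ring
  have hbound : shift + sumCgfBound t n a b = lam ^ 2 * n / (8 * (a + b) * (a + b + n)) := by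
    simp only [shift, t, sumCgfBound]
    field_simp
    ring
  simp_rw [hexponent, exp_add]
  rw [integral_const_mul, ← hbound, exp_add]
  gcongr
  exact integral_exp_mul_sum_betaBernoulli_le t n ha hb
end

section
/- If a random variable X following the Beta(α, β) distribution, then X is 1/(4(α+β+1))-sub-Gaussian: E[exp(λ(X − α/(α+β)))] ≤ exp(λ²/(8(α+β+1))) for all λ ∈ ℝ. -/
/-!
Write `m = a / (a + b)`, `e = (a - b) / (a + b)` and `M t = E[exp (t (X - m))]`. Integrating by
parts against `x ^ a (1 - x) ^ b` gives Stein's identity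
`E[(a (1 - X) - b X) h X + X (1 - X) h' X] = 0`, and `h x = exp (t (x - m))` turns it into the
linear ODE `t M'' + (a + b + e t) M' = (1 - e ^ 2) / 4 * t * M`.
With `s = 1 / (4 (a + b + 1))`, the integrating factor `t ^ (a + b) * exp (e t + s t ^ 2 / 2)`
shows `M' ≤ s t M` for `t > 0`, because `(1 - e ^ 2) / 4 - s (1 + a + b + e t + s t ^ 2)` equals
`-(s t + e / 2) ^ 2`. Hence `M t ≤ M 0 * exp (s t ^ 2 / 2)` for `t ≥ 0`; negative `t` follow by
applying this to `t ↦ M (-t)`, which solves the same ODE with `e` replaced by `-e`.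
-/

open MeasureTheory Real

open Set

section ComparisonODE

variable {c e s v : ℝ} {f f' f'' : ℝ → ℝ}

lemma hasDerivAt_rpow_mul_exp {t : ℝ} (ht : 0 < t) :
    HasDerivAt (fun u ↦ u ^ c * exp (e * u + s * u ^ 2 / 2))
      (t ^ c * exp (e * t + s * t ^ 2 / 2) * (c / t + e + s * t)) t := by
  have hpow : HasDerivAt (fun u ↦ u ^ c) (c * t ^ (c - 1)) t :=
    hasDerivAt_rpow_const (Or.inl ht.ne')
  have hexp : HasDerivAt (fun u ↦ exp (e * u + s * u ^ 2 / 2))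
      (exp (e * t + s * t ^ 2 / 2) * (e + s * t)) t :=
    (((hasDerivAt_id t).const_mul e).add
      (((hasDerivAt_pow 2 t).const_mul s).div_const 2)).exp.congr_deriv (by simp; ring)
  refine (hpow.mul hexp).congr_deriv ?_
  rw [rpow_sub_one ht.ne']
  field_simp
  ring

lemma le_mul_exp_sq_of_deriv_le (hf : ∀ t, HasDerivAt f (f' t) t)
    (hle : ∀ t, 0 < t → f' t ≤ s * t * f t) {t : ℝ} (ht : 0 ≤ t) :
    f t ≤ f 0 * exp (s * t ^ 2 / 2) := by
  set g : ℝ → ℝ := fun u ↦ f u * exp (-(s * u ^ 2 / 2))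
  have hg : ∀ u, HasDerivAt g ((f' u - s * u * f u) * exp (-(s * u ^ 2 / 2))) u := fun u ↦
    ((hf u).mul (((hasDerivAt_pow 2 u).const_mul s).div_const 2).neg.exp).congr_deriv
      (by simp; ring)
  have hanti : AntitoneOn g (Ici 0) := by
    refine antitoneOn_of_hasDerivWithinAt_nonpos (convex_Ici 0)
      (fun u _ ↦ (hg u).continuousAt.continuousWithinAt) (fun u _ ↦ (hg u).hasDerivWithinAt)
      fun u hu ↦ ?_
    rw [interior_Ici] at hu
    exact mul_nonpos_of_nonpos_of_nonneg (sub_nonpos.2 (hle u hu)) (exp_pos _).le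
  have hgt : g t ≤ f 0 := by simpa [g] using hanti self_mem_Ici ht ht
  calc f t = g t * exp (s * t ^ 2 / 2) := by simp [g, mul_assoc, ← exp_add]
    _ ≤ f 0 * exp (s * t ^ 2 / 2) := by gcongr

lemma deriv_le_of_ode (hc : 0 < c) (hf : ∀ t, HasDerivAt f (f' t) t)
    (hf' : ∀ t, HasDerivAt f' (f'' t) t) (hf0 : ∀ t, 0 ≤ f t)
    (hode : ∀ t, t * f'' t + (c + e * t) * f' t = v * t * f t)
    (hv : ∀ t, 0 < t → v ≤ s * (1 + c + e * t + s * t ^ 2)) {t : ℝ} (ht : 0 < t) :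
    f' t ≤ s * t * f t := by
  set W : ℝ → ℝ := fun u ↦ u ^ c * exp (e * u + s * u ^ 2 / 2)
  have hW : ∀ u, 0 < u → 0 < W u := fun u hu ↦ mul_pos (rpow_pos_of_pos hu c) (exp_pos _)
  set D : ℝ → ℝ := fun u ↦ f' u - s * u * f u
  have hD : ∀ u, HasDerivAt D (f'' u - s * f u - s * u * f' u) u := fun u ↦
    ((hf' u).sub (((hasDerivAt_id u).const_mul s).mul (hf u))).congr_deriv (by simp; ring)
  have hE : ∀ u, 0 < u → HasDerivAt (fun u ↦ W u * D u)
      (W u * (f u * (v - s * (1 + c + e * u + s * u ^ 2)))) u := by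
    intro u hu
    refine ((hasDerivAt_rpow_mul_exp hu).mul (hD u)).congr_deriv ?_
    have key : (c / u + e + s * u) * D u + (f'' u - s * f u - s * u * f' u)
        = f u * (v - s * (1 + c + e * u + s * u ^ 2)) := by
      field_simp
      linear_combination hode u
    rw [← key]
    ring
  have hE_cont : Continuous fun u ↦ W u * D u :=
    ((continuous_rpow_const hc.le).mul (by fun_prop)).mul
      (continuous_iff_continuousAt.2 fun u ↦ (hD u).continuousAt)
  have hanti : AntitoneOn (fun u ↦ W u * D u) (Ici 0) := by
    refine antitoneOn_of_hasDerivWithinAt_nonpos (convex_Ici 0) hE_cont.continuousOn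
      (fun u hu ↦ (hE u (by simpa using hu)).hasDerivWithinAt) fun u hu ↦ ?_
    rw [interior_Ici] at hu
    exact mul_nonpos_of_nonneg_of_nonpos (hW u hu).le
      (mul_nonpos_of_nonneg_of_nonpos (hf0 u) (sub_nonpos.2 (hv u hu)))
  have hWD : W t * D t ≤ 0 := by
    simpa [W, zero_rpow hc.ne'] using hanti self_mem_Ici ht.le ht.le
  simpa [D, sub_nonpos] using nonpos_of_mul_nonpos_right hWD (hW t ht)

lemma le_mul_exp_of_ode_of_nonneg (hc : 0 < c) (hf : ∀ t, HasDerivAt f (f' t) t)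
    (hf' : ∀ t, HasDerivAt f' (f'' t) t) (hf0 : ∀ t, 0 ≤ f t)
    (hode : ∀ t, t * f'' t + (c + e * t) * f' t = (1 - e ^ 2) / 4 * t * f t)
    {t : ℝ} (ht : 0 ≤ t) : f t ≤ f 0 * exp (t ^ 2 / (8 * (c + 1))) := by
  set s := 1 / (4 * (c + 1))
  have hs : s * (c + 1) = 1 / 4 := by simp only [s]; field_simp
  have hv : ∀ t, 0 < t → (1 - e ^ 2) / 4 ≤ s * (1 + c + e * t + s * t ^ 2) := fun t _ ↦ by
    nlinarith [sq_nonneg (s * t + e / 2)]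
  convert le_mul_exp_sq_of_deriv_le hf (fun t ht ↦ deriv_le_of_ode hc hf hf' hf0 hode hv ht) ht
    using 3
  field_simp
  linear_combination (-8 * t ^ 2) * hs

theorem le_mul_exp_of_ode (hc : 0 < c) (hf : ∀ t, HasDerivAt f (f' t) t)
    (hf' : ∀ t, HasDerivAt f' (f'' t) t) (hf0 : ∀ t, 0 ≤ f t)
    (hode : ∀ t, t * f'' t + (c + e * t) * f' t = (1 - e ^ 2) / 4 * t * f t) (t : ℝ) :
    f t ≤ f 0 * exp (t ^ 2 / (8 * (c + 1))) := by
  rcases le_total 0 t with ht | ht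
  · exact le_mul_exp_of_ode_of_nonneg hc hf hf' hf0 hode ht
  · have hneg := le_mul_exp_of_ode_of_nonneg (f := fun u ↦ f (-u)) (f' := fun u ↦ -f' (-u))
      (f'' := fun u ↦ f'' (-u)) (e := -e) hc
      (fun u ↦ ((hf (-u)).comp u (hasDerivAt_neg u)).congr_deriv (by ring))
      (fun u ↦ ((hf' (-u)).comp u (hasDerivAt_neg u)).neg.congr_deriv (by ring))
      (fun u ↦ hf0 (-u)) (fun u ↦ by linear_combination -hode (-u)) (neg_nonneg.2 ht)
    simpa using hneg

end ComparisonODE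

noncomputable def betaWeight (a b x : ℝ) : ℝ := x ^ (a - 1) * (1 - x) ^ (b - 1)

section BetaWeight

variable {a b : ℝ}

lemma betaWeight_pos {x : ℝ} (hx : x ∈ Ioo 0 1) : 0 < betaWeight a b x :=
  mul_pos (rpow_pos_of_pos hx.1 _) (rpow_pos_of_pos (sub_pos.2 hx.2) _)

lemma integrableOn_betaWeight (ha : 0 < a) (hb : 0 < b) :
    IntegrableOn (betaWeight a b) (Icc 0 1) := by
  have h := Complex.betaIntegral_convergent (u := a) (v := b) (by simpa) (by simpa)
  rw [intervalIntegrable_iff_integrableOn_Icc_of_le zero_le_one] at h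
  have hre : IntegrableOn (fun x : ℝ ↦ ((x : ℂ) ^ ((a : ℂ) - 1) * (1 - (x : ℂ)) ^ ((b : ℂ) - 1)).re)
      (Icc 0 1) := Complex.reCLM.integrable_comp h
  refine hre.congr_fun (fun x hx ↦ ?_) measurableSet_Icc
  simp only [betaWeight]
  rw [← Complex.ofReal_one, ← Complex.ofReal_sub, ← Complex.ofReal_sub, ← Complex.ofReal_sub,
    ← Complex.ofReal_cpow hx.1, ← Complex.ofReal_cpow (sub_nonneg.2 hx.2), ← Complex.ofReal_mul,
    Complex.ofReal_re]

lemma integral_betaWeight_pos (ha : 0 < a) (hb : 0 < b) :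
    0 < ∫ x in Ioo 0 1, betaWeight a b x := by
  rw [← integral_Ioc_eq_integral_Ioo, ← intervalIntegral.integral_of_le zero_le_one]
  exact intervalIntegral.intervalIntegral_pos_of_pos_on
    ((intervalIntegrable_iff_integrableOn_Icc_of_le zero_le_one).2 (integrableOn_betaWeight ha hb))
    (fun x hx ↦ betaWeight_pos hx) zero_lt_one

lemma integrableOn_mul_betaWeight (ha : 0 < a) (hb : 0 < b) {g : ℝ → ℝ}
    (hg : ContinuousOn g (Icc 0 1)) :
    IntegrableOn (fun x ↦ g x * betaWeight a b x) (Ioo 0 1) :=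
  ((integrableOn_betaWeight ha hb).continuousOn_mul hg isCompact_Icc).mono_set Ioo_subset_Icc_self

lemma hasDerivAt_rpow_mul_one_sub_rpow {x : ℝ} (hx : x ∈ Ioo 0 1) :
    HasDerivAt (fun y ↦ y ^ a * (1 - y) ^ b) ((a * (1 - x) - b * x) * betaWeight a b x) x := by
  have hx0 : x ≠ 0 := hx.1.ne'
  have hx1 : 1 - x ≠ 0 := (sub_pos.2 hx.2).ne'
  refine ((hasDerivAt_rpow_const (p := a) (Or.inl hx0)).mul
    (((hasDerivAt_id x).const_sub 1).rpow_const (p := b) (Or.inl hx1))).congr_deriv ?_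
  simp only [id, betaWeight]
  rw [rpow_sub_one hx0, rpow_sub_one hx1]
  field_simp
  ring

lemma integral_stein_betaWeight (ha : 0 < a) (hb : 0 < b) {h h' : ℝ → ℝ}
    (hh : ∀ x, HasDerivAt h (h' x) x) (hh' : Continuous h') :
    ∫ x in Ioo 0 1, ((a * (1 - x) - b * x) * h x + x * (1 - x) * h' x) * betaWeight a b x
      = 0 := by
  have hcont : Continuous h := continuous_iff_continuousAt.2 fun x ↦ (hh x).continuousAt
  have hF : ∀ x ∈ Ioo (0 : ℝ) 1, HasDerivAt (fun y ↦ y ^ a * (1 - y) ^ b * h y)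
      (((a * (1 - x) - b * x) * h x + x * (1 - x) * h' x) * betaWeight a b x) x := by
    intro x hx
    refine ((hasDerivAt_rpow_mul_one_sub_rpow hx).mul (hh x)).congr_deriv ?_
    have hx0 : x ≠ 0 := hx.1.ne'
    have hx1 : 1 - x ≠ 0 := (sub_pos.2 hx.2).ne'
    rw [betaWeight, rpow_sub_one hx0, rpow_sub_one hx1]
    field_simp
  have hFcont : ContinuousOn (fun y : ℝ ↦ y ^ a * (1 - y) ^ b * h y) (Icc 0 1) :=
    (((continuous_rpow_const ha.le).mul
      ((continuous_rpow_const hb.le).comp (continuous_const.sub continuous_id))).mul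
      hcont).continuousOn
  have hint := integrableOn_mul_betaWeight ha hb (g := fun x ↦ (a * (1 - x) - b * x) * h x +
    x * (1 - x) * h' x) (by fun_prop)
  rw [← integral_Ioc_eq_integral_Ioo, ← intervalIntegral.integral_of_le zero_le_one,
    intervalIntegral.integral_eq_sub_of_hasDerivAt_of_le zero_le_one hFcont hF
      ((intervalIntegrable_iff_integrableOn_Ioo_of_le zero_le_one).2 hint)]
  simp [zero_rpow ha.ne', zero_rpow hb.ne']

end BetaWeight

section BetaMeasure

variable {a b : ℝ}

noncomputable def betaDensity (a b : ℝ) : ℝ → ℝ :=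
  indicator (Ioo 0 1) fun x ↦ betaWeight a b x / ∫ z in Ioo 0 1, betaWeight a b z

lemma betaMeasure_eq_withDensity :
    betaMeasure a b = volume.withDensity fun x ↦ ENNReal.ofReal (betaDensity a b x) :=
  rfl

lemma measurable_betaDensity (a b : ℝ) : Measurable (betaDensity a b) :=
  Measurable.indicator (by unfold betaWeight; fun_prop) measurableSet_Ioo

lemma integral_betaMeasure (g : ℝ → ℝ) :
    ∫ x, g x ∂betaMeasure a b
      = (∫ x in Ioo 0 1, g x * betaWeight a b x) / ∫ x in Ioo 0 1, betaWeight a b x := by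
  have hB : 0 ≤ ∫ x in Ioo 0 1, betaWeight a b x :=
    setIntegral_nonneg measurableSet_Ioo fun x hx ↦ (betaWeight_pos hx).le
  rw [betaMeasure_eq_withDensity, integral_withDensity_eq_integral_toReal_smul
    (measurable_betaDensity a b).ennreal_ofReal (ae_of_all _ fun _ ↦ ENNReal.ofReal_lt_top),
    ← integral_div, ← integral_indicator measurableSet_Ioo]
  congr 1 with x
  by_cases hx : x ∈ Ioo 0 1
  · simp only [betaDensity, indicator_of_mem hx, smul_eq_mul]
    rw [ENNReal.toReal_ofReal (div_nonneg (betaWeight_pos hx).le hB), betaWeight]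
    ring
  · simp [betaDensity, indicator_of_notMem hx]

lemma isProbabilityMeasure_betaMeasure (ha : 0 < a) (hb : 0 < b) :
    IsProbabilityMeasure (betaMeasure a b) := by
  have h := integral_betaMeasure (a := a) (b := b) fun _ ↦ 1
  simp only [integral_const, smul_eq_mul, mul_one, one_mul,
    div_self (integral_betaWeight_pos ha hb).ne'] at h
  exact ⟨(ENNReal.toReal_eq_one_iff _).1 h⟩

lemma ae_mem_Ioo_betaMeasure : ∀ᵐ x ∂betaMeasure a b, x ∈ Ioo 0 1 := by
  rw [betaMeasure_eq_withDensity, ae_withDensity_iff (measurable_betaDensity a b).ennreal_ofReal]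
  exact ae_of_all _ fun x hx ↦ by_contra fun h ↦ hx (by simp [betaDensity, indicator_of_notMem h])

lemma integrable_betaMeasure_of_continuous (ha : 0 < a) (hb : 0 < b) {g : ℝ → ℝ}
    (hg : Continuous g) : Integrable g (betaMeasure a b) := by
  have := isProbabilityMeasure_betaMeasure ha hb
  obtain ⟨C, hC⟩ := isCompact_Icc.exists_bound_of_continuousOn (hg.continuousOn (s := Icc 0 1))
  exact .of_bound hg.aestronglyMeasurable C
    (ae_mem_Ioo_betaMeasure.mono fun x hx ↦ hC x (Ioo_subset_Icc_self hx))

lemma integral_stein_betaMeasure (ha : 0 < a) (hb : 0 < b) {h h' : ℝ → ℝ}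
    (hh : ∀ x, HasDerivAt h (h' x) x) (hh' : Continuous h') :
    ∫ x, (a * (1 - x) - b * x) * h x + x * (1 - x) * h' x ∂betaMeasure a b = 0 := by
  rw [integral_betaMeasure, integral_stein_betaWeight ha hb hh hh', zero_div]

end BetaMeasure

noncomputable def betaExpMoment (a b : ℝ) (n : ℕ) (t : ℝ) : ℝ :=
  ∫ x, (x - a / (a + b)) ^ n * exp (t * (x - a / (a + b))) ∂betaMeasure a b

lemma betaExpMoment_zero_nonneg (a b t : ℝ) : 0 ≤ betaExpMoment a b 0 t :=
  integral_nonneg fun x ↦ by positivity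

section BetaExpMoment

variable {a b : ℝ}

lemma hasDerivAt_betaExpMoment (ha : 0 < a) (hb : 0 < b) (n : ℕ) (t : ℝ) :
    HasDerivAt (betaExpMoment a b n) (betaExpMoment a b (n + 1) t) t := by
  have hX :
      ProbabilityTheory.integrableExpSet (fun x ↦ x - a / (a + b)) (betaMeasure a b) = univ :=
    eq_univ_of_forall fun t ↦ integrable_betaMeasure_of_continuous ha hb (by fun_prop)
  exact ProbabilityTheory.hasDerivAt_integral_pow_mul_exp_real (by simp [hX]) n

lemma betaExpMoment_ode (ha : 0 < a) (hb : 0 < b) (t : ℝ) :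
    t * betaExpMoment a b 2 t + (a + b + (a - b) / (a + b) * t) * betaExpMoment a b 1 t
      = (1 - ((a - b) / (a + b)) ^ 2) / 4 * t * betaExpMoment a b 0 t := by
  set m := a / (a + b)
  have hint : ∀ n : ℕ, Integrable (fun x ↦ (x - m) ^ n * exp (t * (x - m))) (betaMeasure a b) :=
    fun n ↦ integrable_betaMeasure_of_continuous ha hb (by fun_prop)
  have hstein := integral_stein_betaMeasure ha hb (h := fun x ↦ exp (t * (x - m)))
    (h' := fun x ↦ exp (t * (x - m)) * t)
    (fun x ↦ (((hasDerivAt_id x).sub_const m).const_mul t).exp.congr_deriv (by simp))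
    (by fun_prop)
  have hpoly : ∀ x,
      (a * (1 - x) - b * x) * exp (t * (x - m)) + x * (1 - x) * (exp (t * (x - m)) * t)
      = (1 - ((a - b) / (a + b)) ^ 2) / 4 * t * ((x - m) ^ 0 * exp (t * (x - m)))
        - (t * ((x - m) ^ 2 * exp (t * (x - m)))
          + (a + b + (a - b) / (a + b) * t) * ((x - m) ^ 1 * exp (t * (x - m)))) := by
    intro x
    simp only [m]
    field_simp
    ring
  simp only [hpoly] at hstein
  rw [integral_sub ((hint 0).const_mul _)
      (by exact ((hint 2).const_mul _).add ((hint 1).const_mul _)),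
    integral_add ((hint 2).const_mul _) ((hint 1).const_mul _), integral_const_mul,
    integral_const_mul, integral_const_mul] at hstein
  simp only [betaExpMoment]
  linarith

end BetaExpMoment

/-- A Beta(α, β) random variable is `1/(4(α+β+1))`-sub-Gaussian around its mean
`α/(α+β)`: `E[exp(λ(X − α/(α+β)))] ≤ exp(λ²/(8(α+β+1)))` for all `λ`. -/
theorem stmt_6 (a b : ℝ) (ha : 0 < a) (hb : 0 < b) :
    ∀ lam : ℝ,
      ∫ x, Real.exp (lam * (x - a / (a + b))) ∂(betaMeasure a b)
        ≤ Real.exp (lam ^ 2 / (8 * (a + b + 1))) := by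
  intro lam
  have := isProbabilityMeasure_betaMeasure ha hb
  have h := le_mul_exp_of_ode (c := a + b) (f' := betaExpMoment a b 1)
    (f'' := betaExpMoment a b 2) (by positivity) (hasDerivAt_betaExpMoment ha hb 0)
    (hasDerivAt_betaExpMoment ha hb 1) (betaExpMoment_zero_nonneg a b)
    (betaExpMoment_ode ha hb) lam
  simpa [betaExpMoment] using h
end

section
/- Let K arms have independent reward sequences, μ_{a,n} = E[μ_a(θ_a)|R_{a,1},…,R_{a,n}], and S_a(n) = Σ_{s=1}^n μ_{a,s−1}. Then E[max_{n∈N_T} Σ_a n_a · μ_{a,T−1}] ≥ E[max_{n∈N_T} Σ_a S_a(n_a)], where N_T = {(n_1,…,n_K) ∈ ℤ_+^K : Σ_a n_a = T}; i.e., W^{Irs.FH}(T,y) ≥ W^{Irs.V-Zero}(T,y). -/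
/-!
Interpolate between the two sides. For thresholds `θ : ι → ℕ`, credit the first `min n θ_a` pulls
of arm `a` with the running posterior means `μ_{a,u}` and the remaining ones with the terminal
posterior `μ_{a,L}` (`hybridSum`); `θ ≡ T` gives the right-hand side and `θ ≡ 0` the left-hand
side. Lowering one threshold `θ_{a₀} = t + 1` to `t` turns the value of every allocation from
`A + (γ - 1) D` into `A + γ D`, where `D = μ_{a₀,L} - μ_{a₀,t}` and `A` is measurable for the
σ-algebra `𝒢` generated by the first `t` rewards of `a₀` and by all other arms. By independence of
the arms and the tower property, `D` integrates to zero over every set of `𝒢`. Pointwise, the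
maximum of `A + (γ - 1) D` is at most the maximum of `A + γ D` minus `D` on the `𝒢`-measurable
event where some allocation pulling `a₀` more than `t` times beats, in `A`, all those that do not;
integrating, the expected maximum can only grow as the thresholds decrease.
-/

open MeasureTheory ProbabilityTheory

theorem le_apply_zero_of_le_update {ι : Type*} [Finite ι] [DecidableEq ι]
    (P : (ι → ℕ) → Prop) (g : (ι → ℕ) → ℝ)
    (hP : ∀ θ a t, P θ → θ a = t + 1 → P (Function.update θ a t))
    (hg : ∀ θ a t, P θ → θ a = t + 1 → g θ ≤ g (Function.update θ a t)) :
    ∀ θ, P θ → g θ ≤ g 0 := by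
  intro θ
  induction θ using WellFoundedLT.induction with
  | ind θ ih =>
    intro hθ
    by_cases h0 : θ = 0
    · rw [h0]
    obtain ⟨a, ha⟩ : ∃ a, θ a ≠ 0 := by
      by_contra! h; exact h0 (funext h)
    obtain ⟨t, ht⟩ := Nat.exists_eq_succ_of_ne_zero ha
    have hlt : Function.update θ a t < θ := by
      refine lt_of_le_of_ne (fun b => ?_) fun h => ?_
      · rcases eq_or_ne b a with rfl | hb
        · simp [ht]
        · simp [hb]
      · have := congrFun h a; simp [ht] at this
    exact (hg θ a t hθ ht).trans (ih _ hlt (hP θ a t hθ ht))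

section PointwiseSup

variable {ι : Type*} [Finite ι] (a : ι → ℝ) (γ : ι → ℕ) (d : ℝ)

theorem ciSup_add_pred_mul_le_sub_of_exists
    (h : ∃ j, 0 < γ j ∧ ∀ i, γ i = 0 → a i < a j) :
    ⨆ i, (a i + ((γ i - 1 : ℕ) : ℝ) * d) ≤ (⨆ i, (a i + γ i * d)) - d := by
  obtain ⟨j, hj, hjmax⟩ := h
  have : Nonempty ι := ⟨j⟩
  have hle : ∀ k, a k + γ k * d ≤ ⨆ i, (a i + γ i * d) :=
    le_ciSup (Set.finite_range _).bddAbove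
  refine ciSup_le fun i => ?_
  rcases Nat.eq_zero_or_pos (γ i) with hi | hi
  · have hj1 : (1 : ℝ) ≤ γ j := by exact_mod_cast hj
    have hi_le := hle i
    simp only [hi, Nat.zero_sub, Nat.cast_zero, zero_mul, add_zero] at hi_le ⊢
    rcases le_or_gt 0 d with hd | hd
    · nlinarith [hle j, hjmax i hi]
    · linarith
  · have := hle i
    rw [Nat.cast_pred hi]; linarith

theorem ciSup_add_pred_mul_le_of_forall [Nonempty ι]
    (h : ∀ j, 0 < γ j → ∃ i, γ i = 0 ∧ a j ≤ a i) :
    ⨆ i, (a i + ((γ i - 1 : ℕ) : ℝ) * d) ≤ ⨆ i, (a i + γ i * d) := by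
  have hle : ∀ k, a k + γ k * d ≤ ⨆ i, (a i + γ i * d) :=
    le_ciSup (Set.finite_range _).bddAbove
  refine ciSup_le fun j => ?_
  rcases Nat.eq_zero_or_pos (γ j) with hj | hj
  · simpa [hj] using hle j
  · rw [Nat.cast_pred hj]
    rcases le_or_gt 0 d with hd | hd
    · linarith [hle j]
    · obtain ⟨i, hi, hji⟩ := h j hj
      have := hle i
      simp only [hi, Nat.cast_zero, zero_mul, add_zero] at this
      have : (1 : ℝ) ≤ γ j := by exact_mod_cast hj
      nlinarith

end PointwiseSup

def hybridSum (c : ℕ → ℝ) (ℓ : ℝ) (θ n : ℕ) : ℝ :=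
  ∑ u ∈ Finset.range (min n θ), c u + ((n - θ : ℕ) : ℝ) * ℓ

namespace hybridSum

variable (c : ℕ → ℝ) (ℓ : ℝ) {θ n : ℕ}

theorem of_le (h : n ≤ θ) : hybridSum c ℓ θ n = ∑ u ∈ Finset.range n, c u := by
  simp [hybridSum, min_eq_left h, Nat.sub_eq_zero_of_le h]

theorem zero_left (n : ℕ) : hybridSum c ℓ 0 n = n * ℓ := by
  simp [hybridSum]

theorem eq_add (t n : ℕ) :
    hybridSum c ℓ t n = hybridSum c (c t) t n + ((n - t : ℕ) : ℝ) * (ℓ - c t) := by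
  simp only [hybridSum]; ring

theorem succ_eq_add (t n : ℕ) :
    hybridSum c ℓ (t + 1) n = hybridSum c (c t) t n + ((n - t - 1 : ℕ) : ℝ) * (ℓ - c t) := by
  rcases le_or_gt n t with h | h
  · simp [hybridSum, min_eq_left h, min_eq_left (h.trans t.le_succ), Nat.sub_eq_zero_of_le h,
      Nat.sub_eq_zero_of_le (h.trans t.le_succ)]
  · obtain ⟨k, rfl⟩ := Nat.exists_eq_add_of_lt h
    rw [hybridSum, hybridSum, min_eq_right h.le, min_eq_right (by omega), Finset.sum_range_succ]
    push_cast [show t + k + 1 - t = k + 1 by omega, show t + k + 1 - (t + 1) = k by omega]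
    ring

section Sum

variable {ι : Type*} [Fintype ι] [DecidableEq ι] (c : ι → ℕ → ℝ) (ℓ : ι → ℝ) (θ n : ι → ℕ)
  {a₀ : ι} {t : ℕ}

theorem sum_eq_add_of_apply_eq_succ (hθ : θ a₀ = t + 1) :
    ∑ a, hybridSum (c a) (ℓ a) (θ a) (n a)
      = (hybridSum (c a₀) (c a₀ t) t (n a₀)
          + ∑ b ∈ Finset.univ.erase a₀, hybridSum (c b) (ℓ b) (θ b) (n b))
        + ((n a₀ - t - 1 : ℕ) : ℝ) * (ℓ a₀ - c a₀ t) := by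
  rw [← Finset.add_sum_erase _ _ (Finset.mem_univ a₀), hθ, succ_eq_add]
  ring

theorem sum_update_eq_add :
    ∑ a, hybridSum (c a) (ℓ a) (Function.update θ a₀ t a) (n a)
      = (hybridSum (c a₀) (c a₀ t) t (n a₀)
          + ∑ b ∈ Finset.univ.erase a₀, hybridSum (c b) (ℓ b) (θ b) (n b))
        + ((n a₀ - t : ℕ) : ℝ) * (ℓ a₀ - c a₀ t) := by
  rw [← Finset.add_sum_erase _ _ (Finset.mem_univ a₀), Function.update_self, eq_add (c a₀)]
  have : ∀ b ∈ Finset.univ.erase a₀, hybridSum (c b) (ℓ b) (Function.update θ a₀ t b) (n b)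
      = hybridSum (c b) (ℓ b) (θ b) (n b) := fun b hb => by
    rw [Function.update_of_ne (Finset.ne_of_mem_erase hb)]
  rw [Finset.sum_congr rfl this]
  ring

end Sum

end hybridSum

theorem MeasureTheory.Integrable.ciSup {Ω ι : Type*} {m0 : MeasurableSpace Ω} {μ : Measure Ω}
    [Fintype ι] {F : ι → Ω → ℝ} (hF : ∀ i, Integrable (F i) μ) :
    Integrable (fun ω => ⨆ i, F i ω) μ := by
  rcases isEmpty_or_nonempty ι with hι | hι
  · simp only [Real.iSup_of_isEmpty]
    exact integrable_zero Ω ℝ μ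
  have ⟨i₀⟩ := hι
  refine Integrable.mono' (integrable_finsetSum Finset.univ fun i _ => (hF i).abs)
    (AEMeasurable.iSup fun i => (hF i).aemeasurable).aestronglyMeasurable
    (ae_of_all _ fun ω => ?_)
  have hF_le_sum : ∀ i, |F i ω| ≤ ∑ j, |F j ω| := fun i =>
    Finset.single_le_sum (fun j _ => abs_nonneg (F j ω)) (Finset.mem_univ i)
  rw [Real.norm_eq_abs, abs_le]
  constructor
  · have := neg_abs_le (F i₀ ω)
    linarith [hF_le_sum i₀, le_ciSup (Set.finite_range fun i => F i ω).bddAbove i₀]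
  · exact ciSup_le fun i => (le_abs_self _).trans (hF_le_sum i)

theorem integral_ciSup_add_pred_mul_le {Ω ι : Type*} {m0 : MeasurableSpace Ω} {μ : Measure Ω}
    [Fintype ι] [Nonempty ι] {𝒢 : MeasurableSpace Ω} (h𝒢 : 𝒢 ≤ m0) {A : ι → Ω → ℝ}
    (hA : ∀ i, StronglyMeasurable[𝒢] (A i)) (hAi : ∀ i, Integrable (A i) μ) (γ : ι → ℕ)
    {D : Ω → ℝ} (hD : Integrable D μ) (hD0 : ∀ s, MeasurableSet[𝒢] s → ∫ ω in s, D ω ∂μ = 0) :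
    ∫ ω, ⨆ i, (A i ω + ((γ i - 1 : ℕ) : ℝ) * D ω) ∂μ ≤ ∫ ω, ⨆ i, (A i ω + γ i * D ω) ∂μ := by
  set E := {ω | ∃ j, 0 < γ j ∧ ∀ i, γ i = 0 → A i ω < A j ω}
  have hE : MeasurableSet[𝒢] E :=
    measurableSet_setOfPred.mpr <| Measurable.exists fun j => measurable_const.and <|
      Measurable.forall fun i => measurable_const.imp <|
        measurableSet_setOfPred.mp (measurableSet_lt (hA i).measurable (hA j).measurable)
  have hpt : ∀ ω, ⨆ i, (A i ω + ((γ i - 1 : ℕ) : ℝ) * D ω)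
      ≤ (⨆ i, (A i ω + γ i * D ω)) - E.indicator D ω := by
    intro ω
    by_cases hω : ω ∈ E
    · rw [Set.indicator_of_mem hω]
      exact ciSup_add_pred_mul_le_sub_of_exists _ _ _ hω
    · rw [Set.indicator_of_notMem hω, sub_zero]
      refine ciSup_add_pred_mul_le_of_forall _ _ _ fun j hj => ?_
      simp only [E, Set.mem_ofPred_eq] at hω
      push Not at hω
      exact hω j hj
  have hsup : ∀ c : ι → ℕ, Integrable (fun ω => ⨆ i, (A i ω + c i * D ω)) μ := fun c =>
    Integrable.ciSup fun i => (hAi i).add (hD.const_mul _)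
  have hED : Integrable (E.indicator D) μ := hD.indicator (h𝒢 _ hE)
  calc ∫ ω, ⨆ i, (A i ω + ((γ i - 1 : ℕ) : ℝ) * D ω) ∂μ
      ≤ ∫ ω, ((⨆ i, (A i ω + γ i * D ω)) - E.indicator D ω) ∂μ :=
        integral_mono (hsup _) ((hsup γ).sub hED) hpt
    _ = ∫ ω, ⨆ i, (A i ω + γ i * D ω) ∂μ := by
        rw [integral_sub (hsup γ) hED, integral_indicator (h𝒢 _ hE), hD0 E hE, sub_zero]

section Independence

variable {Ω : Type*} {m0 : MeasurableSpace Ω} {μ : Measure Ω} {m₁ m₂ : MeasurableSpace Ω}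

theorem setIntegral_inter_eq_measureReal_mul_of_indep (hle₁ : m₁ ≤ m0) (hle₂ : m₂ ≤ m0)
    (hindp : Indep m₁ m₂ μ) {φ : Ω → ℝ} (hφ : StronglyMeasurable[m₁] φ) (hφi : Integrable φ μ)
    {A B : Set Ω} (hA : MeasurableSet[m₁] A) (hB : MeasurableSet[m₂] B) :
    ∫ x in A ∩ B, φ x ∂μ = (∫ x in A, φ x ∂μ) * μ.real B := by
  have hAφ : Measurable[m₁] (A.indicator φ) := hφ.measurable.indicator hA
  have hB1 : Measurable[m₂] (B.indicator (1 : Ω → ℝ)) := measurable_const.indicator hB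
  have hindep : IndepFun (A.indicator φ) (B.indicator (1 : Ω → ℝ)) μ := by
    rw [IndepFun_iff_Indep]
    exact indep_of_indep_of_le_right (indep_of_indep_of_le_left hindp hAφ.comap_le) hB1.comap_le
  have hprod : A.indicator φ * B.indicator 1 = (A ∩ B).indicator φ := by
    rw [Set.inter_comm, ← Set.indicator_indicator]
    ext x; by_cases hx : x ∈ B <;> simp [hx]
  rw [← integral_indicator (hle₁ _ hA |>.inter (hle₂ _ hB)), ← hprod,
    hindep.integral_mul_eq_mul_integral
      (hφi.indicator (hle₁ _ hA)).aestronglyMeasurable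
      (measurable_const.indicator (hle₂ _ hB)).aestronglyMeasurable,
    integral_indicator (hle₁ _ hA), integral_indicator_one (hle₂ _ hB)]

theorem setIntegral_condExp_sup_of_indep [IsFiniteMeasure μ] {m₃ : MeasurableSpace Ω}
    (hle₁ : m₁ ≤ m0) (hle₂ : m₂ ≤ m0) (h₃₁ : m₃ ≤ m₁) (hindp : Indep m₁ m₂ μ) {f : Ω → ℝ}
    (hf : StronglyMeasurable[m₁] f) (hfi : Integrable f μ) {s : Set Ω}
    (hs : MeasurableSet[m₃ ⊔ m₂] s) :
    ∫ x in s, μ[f | m₃] x ∂μ = ∫ x in s, f x ∂μ := by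
  have hle₃ : m₃ ≤ m0 := h₃₁.trans hle₁
  have hle : m₃ ⊔ m₂ ≤ m0 := sup_le hle₃ hle₂
  have hgen : m₃ ⊔ m₂ = MeasurableSpace.generateFrom
      (Set.image2 (· ∩ ·) {A | MeasurableSet[m₃] A} {B | MeasurableSet[m₂] B}) := by
    refine le_antisymm (sup_le ?_ ?_) (MeasurableSpace.generateFrom_le ?_)
    · exact fun A hA => MeasurableSpace.measurableSet_generateFrom
        ⟨A, hA, Set.univ, MeasurableSet.univ, Set.inter_univ A⟩
    · exact fun B hB => MeasurableSpace.measurableSet_generateFrom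
        ⟨Set.univ, MeasurableSet.univ, B, hB, Set.univ_inter B⟩
    · rintro _ ⟨A, hA, B, hB, rfl⟩
      exact (le_sup_left (b := m₂) _ hA).inter (le_sup_right (a := m₃) _ hB)
  have hpi : IsPiSystem
      (Set.image2 (· ∩ ·) {A | MeasurableSet[m₃] A} {B | MeasurableSet[m₂] B}) := by
    rintro _ ⟨A, hA, B, hB, rfl⟩ _ ⟨A', hA', B', hB', rfl⟩ _
    exact ⟨A ∩ A', hA.inter hA', B ∩ B', hB.inter hB', Set.inter_inter_inter_comm A A' B B'⟩
  induction s, hs using MeasurableSpace.induction_on_inter hgen hpi with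
  | empty => simp
  | basic _ hAB =>
    obtain ⟨A, hA, B, hB, rfl⟩ := hAB
    rw [setIntegral_inter_eq_measureReal_mul_of_indep hle₁ hle₂ hindp hf hfi (h₃₁ _ hA) hB,
      setIntegral_inter_eq_measureReal_mul_of_indep hle₁ hle₂ hindp
        (stronglyMeasurable_condExp.mono h₃₁) integrable_condExp (h₃₁ _ hA) hB,
      setIntegral_condExp hle₃ hfi hA]
  | compl t ht iht =>
    rw [setIntegral_compl (hle _ ht) integrable_condExp, setIntegral_compl (hle _ ht) hfi, iht,
      integral_condExp hle₃]
  | iUnion t hdisj ht iht =>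
    have ht0 : ∀ i, MeasurableSet[m0] (t i) := fun i => hle _ (ht i)
    rw [integral_iUnion ht0 hdisj integrable_condExp.integrableOn,
      integral_iUnion ht0 hdisj hfi.integrableOn]
    exact tsum_congr iht

theorem setIntegral_condExp_sub_condExp_eq_zero [IsFiniteMeasure μ] {m₃ m₄ : MeasurableSpace Ω}
    (hle₁ : m₁ ≤ m0) (hle₂ : m₂ ≤ m0) (h₃₄ : m₃ ≤ m₄) (h₄₁ : m₄ ≤ m₁) (hindp : Indep m₁ m₂ μ)
    (f : Ω → ℝ) {s : Set Ω} (hs : MeasurableSet[m₃ ⊔ m₂] s) :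
    ∫ ω in s, (μ[f | m₄] - μ[f | m₃]) ω ∂μ = 0 := by
  have htower : μ[μ[f | m₄] | m₃] =ᵐ[μ] μ[f | m₃] := condExp_condExp_of_le h₃₄ (h₄₁.trans hle₁)
  simp only [Pi.sub_apply]
  rw [integral_sub integrable_condExp.integrableOn integrable_condExp.integrableOn,
    ← setIntegral_congr_ae (sup_le (h₃₄.trans (h₄₁.trans hle₁)) hle₂ s hs)
      (htower.mono fun ω h _ => h),
    setIntegral_condExp_sup_of_indep hle₁ hle₂ (h₃₄.trans h₄₁) hindp
      (stronglyMeasurable_condExp.mono h₄₁) integrable_condExp hs, sub_self]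

end Independence

section Measurability

variable {Ω : Type*} {m0 : MeasurableSpace Ω} {c : ℕ → Ω → ℝ} {ℓ : Ω → ℝ} {θ : ℕ}

theorem stronglyMeasurable_hybridSum {m : MeasurableSpace Ω}
    (hc : ∀ u < θ, StronglyMeasurable[m] (c u)) (hℓ : StronglyMeasurable[m] ℓ) (n : ℕ) :
    StronglyMeasurable[m] fun ω => hybridSum (c · ω) (ℓ ω) θ n :=
  (Finset.stronglyMeasurable_fun_sum _ fun u hu =>
    hc u ((Finset.mem_range.mp hu).trans_le (min_le_right n θ))).add
    (stronglyMeasurable_const.mul hℓ)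

theorem integrable_hybridSum {μ : Measure Ω} (hc : ∀ u, Integrable (c u) μ)
    (hℓ : Integrable ℓ μ) (n : ℕ) : Integrable (fun ω => hybridSum (c · ω) (ℓ ω) θ n) μ :=
  (integrable_finsetSum _ fun u _ => hc u).add (hℓ.const_mul _)

end Measurability

section Arms

variable {ι Ω : Type*} [Fintype ι] [DecidableEq ι] {m0 : MeasurableSpace Ω} {μ : Measure Ω}

noncomputable def hybridValue (μ : Measure Ω) (f : ι → Ω → ℝ) (H : ι → ℕ → MeasurableSpace Ω)
    (L : ℕ) (θ n : ι → ℕ) (ω : Ω) : ℝ :=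
  ∑ a, hybridSum (fun u => μ[f a | H a u] ω) (μ[f a | H a L] ω) (θ a) (n a)

variable [IsFiniteMeasure μ] {F : ι → MeasurableSpace Ω} {H : ι → ℕ → MeasurableSpace Ω}
  {J : Type*} [Fintype J] [Nonempty J]

theorem integral_ciSup_hybridValue_le_update (hF : ∀ a, F a ≤ m0) (hindep : iIndep F μ)
    (hHF : ∀ a n, H a n ≤ F a) (hHmono : ∀ a, Monotone (H a)) (f : ι → Ω → ℝ)
    (n : J → ι → ℕ) {L : ℕ} {θ : ι → ℕ} {a₀ : ι} {t : ℕ}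
    (htL : t ≤ L) (hθ : θ a₀ = t + 1) :
    ∫ ω, ⨆ j, hybridValue μ f H L θ (n j) ω ∂μ
      ≤ ∫ ω, ⨆ j, hybridValue μ f H L (Function.update θ a₀ t) (n j) ω ∂μ := by
  set M := ⨆ b ∈ ({a₀}ᶜ : Set ι), F b
  have hM : M ≤ m0 := iSup₂_le fun b _ => hF b
  have hFM : ∀ b ≠ a₀, F b ≤ H a₀ t ⊔ M := fun b hb =>
    (le_iSup₂ (f := fun b (_ : b ∈ ({a₀}ᶜ : Set ι)) => F b) b hb).trans le_sup_right
  have hindep₀ : Indep (F a₀) M μ := by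
    simpa only [iSup_singleton] using indep_biSup_compl hF hindep {a₀}
  have h𝒢 : H a₀ t ⊔ M ≤ m0 := sup_le ((hHF a₀ t).trans (hF a₀)) hM
  have hD0 : ∀ s, MeasurableSet[H a₀ t ⊔ M] s →
      ∫ ω in s, (μ[f a₀ | H a₀ L] - μ[f a₀ | H a₀ t]) ω ∂μ = 0 := fun s =>
    setIntegral_condExp_sub_condExp_eq_zero (hF a₀) hM (hHmono a₀ htL) (hHF a₀ L) hindep₀ _
  set A : J → Ω → ℝ := fun j ω =>
    hybridSum (fun u => μ[f a₀ | H a₀ u] ω) (μ[f a₀ | H a₀ t] ω) t (n j a₀)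
      + ∑ b ∈ Finset.univ.erase a₀, hybridSum (fun u => μ[f b | H b u] ω) (μ[f b | H b L] ω)
        (θ b) (n j b)
  have hA : ∀ j, StronglyMeasurable[H a₀ t ⊔ M] (A j) := by
    refine fun j => .fun_add ?_ (Finset.stronglyMeasurable_fun_sum _ fun b hb => ?_)
    · exact stronglyMeasurable_hybridSum (c := fun u => μ[f a₀ | H a₀ u])
        (fun u hu => stronglyMeasurable_condExp.mono ((hHmono a₀ hu.le).trans le_sup_left))
        (stronglyMeasurable_condExp.mono le_sup_left) _
    · exact (stronglyMeasurable_hybridSum (c := fun u => μ[f b | H b u])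
        (fun u _ => stronglyMeasurable_condExp.mono (hHF b u))
        (stronglyMeasurable_condExp.mono (hHF b L)) _).mono (hFM b (Finset.ne_of_mem_erase hb))
  have hAi : ∀ j, Integrable (A j) μ := fun j =>
    (integrable_hybridSum (fun _ => integrable_condExp) integrable_condExp _).add
    (integrable_finsetSum _ fun b _ =>
      integrable_hybridSum (fun _ => integrable_condExp) integrable_condExp _)
  simp only [hybridValue, hybridSum.sum_eq_add_of_apply_eq_succ _ _ θ _ hθ,
    hybridSum.sum_update_eq_add]
  exact integral_ciSup_add_pred_mul_le h𝒢 hA hAi (fun j => n j a₀ - t)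
    (integrable_condExp.sub integrable_condExp) hD0

theorem integral_ciSup_hybridValue_le_zero (hF : ∀ a, F a ≤ m0) (hindep : iIndep F μ)
    (hHF : ∀ a n, H a n ≤ F a) (hHmono : ∀ a, Monotone (H a)) (f : ι → Ω → ℝ)
    (n : J → ι → ℕ) (L : ℕ) {θ : ι → ℕ} (hθ : ∀ a, θ a ≤ L + 1) :
    ∫ ω, ⨆ j, hybridValue μ f H L θ (n j) ω ∂μ ≤ ∫ ω, ⨆ j, hybridValue μ f H L 0 (n j) ω ∂μ :=
  le_apply_zero_of_le_update (fun θ => ∀ a, θ a ≤ L + 1)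
    (fun θ => ∫ ω, ⨆ j, hybridValue μ f H L θ (n j) ω ∂μ)
    (fun θ a t hθ _ => update_le_iff.2 ⟨by have := hθ a; omega, fun b _ => hθ b⟩)
    (fun θ a t hθ hθa => integral_ciSup_hybridValue_le_update hF hindep hHF hHmono f n
      (by have := hθ a; omega) hθa) θ hθ

end Arms

theorem stmt_10_general {Ω : Type*} {m0 : MeasurableSpace Ω} (μ : Measure Ω) [IsProbabilityMeasure μ]
    (K : ℕ) (T : ℕ)
    (f : Fin K → Ω → ℝ)
    (R : Fin K → ℕ → Ω → ℝ) (hRmeas : ∀ a n, Measurable (R a n))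
    -- the arms (mean reward together with the reward sequence) are independent
    (hindep : iIndepFun
      (fun a ω => ((f a ω, fun n : ℕ => R a n ω) : ℝ × (ℕ → ℝ))) μ)
    (H : Fin K → ℕ → MeasurableSpace Ω)
    (hH : ∀ a n, H a n = ⨆ i : Fin n, MeasurableSpace.comap (R a i) (borel ℝ)) :
    ∫ ω, (⨆ p : {n : Fin K → Fin (T + 1) // ∑ a, (n a : ℕ) = T},
        ∑ a, ((p.1 a : ℕ) : ℝ) * (μ[f a | H a (T - 1)]) ω) ∂μ
      ≥ ∫ ω, (⨆ p : {n : Fin K → Fin (T + 1) // ∑ a, (n a : ℕ) = T},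
        ∑ a, ∑ s ∈ Finset.range (p.1 a), (μ[f a | H a s]) ω) ∂μ := by
  rcases isEmpty_or_nonempty {n : Fin K → Fin (T + 1) // ∑ a, (n a : ℕ) = T} with hP | hP
  · simp only [Real.iSup_of_isEmpty, ge_iff_le, le_refl]
  let F : Fin K → MeasurableSpace Ω := fun a => (inferInstance : MeasurableSpace (ℕ → ℝ)).comap
    fun ω n => R a n ω
  have hF : ∀ a, F a ≤ m0 := fun a => (measurable_pi_lambda _ (hRmeas a)).comap_le
  have hFindep : iIndep F μ := (iIndepFun_iff_iIndep _ _ _).mp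
    (hindep.comp (fun _ => Prod.snd) fun _ => measurable_snd)
  have hHF : ∀ a n, H a n ≤ F a := fun a n => by
    rw [hH, ← BorelSpace.measurable_eq]
    exact iSup_le fun i => Measurable.comap_le <|
      (measurable_pi_apply (X := fun _ : ℕ => ℝ) i).comp (comap_measurable _)
  have hHmono : ∀ a, Monotone (H a) := fun a u v huv => by
    rw [hH, hH]
    exact iSup_le fun i => le_iSup_of_le (Fin.castLE huv i) le_rfl
  have key := integral_ciSup_hybridValue_le_zero hF hFindep hHF hHmono f
    (fun (p : {n : Fin K → Fin (T + 1) // ∑ a, (n a : ℕ) = T}) a => p.1 a) (T - 1)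
    (θ := fun _ => T) fun _ => by omega
  simpa only [hybridValue, Pi.zero_apply, hybridSum.zero_left,
    hybridSum.of_le _ _ (Nat.le_of_lt_succ (Fin.is_lt _))] using key

/-- `W^Irs.FH(T,y) ≥ W^Irs.V-Zero(T,y)`: with `μ_{a,n} = E[μ_a(θ_a)|R_{a,1},…,R_{a,n}]`
and `S_a(n) = Σ_{s=1}^n μ_{a,s−1}`, and arms independent,
`E[max_{n∈N_T} Σ_a n_a·μ_{a,T−1}] ≥ E[max_{n∈N_T} Σ_a S_a(n_a)]`,
where `N_T` is the set of allocations of `T` pulls among the `K` arms. -/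
theorem stmt_10 {Ω : Type*} {m0 : MeasurableSpace Ω} (μ : Measure Ω) [IsProbabilityMeasure μ]
    (K : ℕ) (hK : 0 < K) (T : ℕ) (hT : 0 < T)
    (f : Fin K → Ω → ℝ) (hf : ∀ a, Integrable (f a) μ)
    (R : Fin K → ℕ → Ω → ℝ) (hRmeas : ∀ a n, Measurable (R a n))
    -- the arms (mean reward together with the reward sequence) are independent
    (hindep : iIndepFun
      (fun a ω => ((f a ω, fun n : ℕ => R a n ω) : ℝ × (ℕ → ℝ))) μ)
    (H : Fin K → ℕ → MeasurableSpace Ω)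
    (hH : ∀ a n, H a n = ⨆ i : Fin n, MeasurableSpace.comap (R a i) (borel ℝ))
    (h1 : Integrable (fun ω =>
      ⨆ p : {n : Fin K → Fin (T + 1) // ∑ a, (n a : ℕ) = T},
        ∑ a, ((p.1 a : ℕ) : ℝ) * (μ[f a | H a (T - 1)]) ω) μ)
    (h2 : Integrable (fun ω =>
      ⨆ p : {n : Fin K → Fin (T + 1) // ∑ a, (n a : ℕ) = T},
        ∑ a, ∑ s ∈ Finset.range (p.1 a), (μ[f a | H a s]) ω) μ) :
    ∫ ω, (⨆ p : {n : Fin K → Fin (T + 1) // ∑ a, (n a : ℕ) = T},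
        ∑ a, ((p.1 a : ℕ) : ℝ) * (μ[f a | H a (T - 1)]) ω) ∂μ
      ≥ ∫ ω, (⨆ p : {n : Fin K → Fin (T + 1) // ∑ a, (n a : ℕ) = T},
        ∑ a, ∑ s ∈ Finset.range (p.1 a), (μ[f a | H a s]) ω) ∂μ :=
  stmt_10_general (m0 := m0) μ K T f R hRmeas hindep H hH
end

section
/- Consider maximizing over binary sequences (a_1,…,a_T) ∈ {0,1}^T the objective Σ_{t=1}^T [μ_{n_t−1}·𝟙{a_t=1} + λ·𝟙{a_t=0} − (T−t)(Γ_{n_t} − Γ_{n_{t−1}})], where n_t = Σ_{s≤t} 𝟙{a_s=1} and (μ_n)_{n≥0}, (Γ_n)_{n≥0} are given real sequences with Γ defined at indices 0,…,T. This maximum equals max_{0≤n≤T} { T·Γ_0 + (T−n)·(λ − min_{0≤s≤n} Γ_s) + Σ_{s=1}^n (μ_{s−1} − Γ_{s−1}) }. -/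
/-- Number of pulls of the stochastic arm among the first `k` periods. -/
def pullCount {T : ℕ} (a : Fin T → Bool) (k : ℕ) : ℕ :=
  (Finset.univ.filter (fun i : Fin T => (i : ℕ) < k ∧ a i = true)).card

/-!
Summation by parts turns the holding cost `(T - t - 1)(Γ_{n_{t+1}} - Γ_{n_t})` into
`T Γ_0 - Σ_t Γ_{n_t}`, so a schedule with `n` pulls in total is worth
`T Γ_0 + Σ_{s<n} (μ_s - Γ_s) + Σ_{t idle} (λ - Γ_{n_t})`. Only the idle terms depend on more than
`n`; each of the `T - n` of them is at most `λ - min_{s ≤ n} Γ_s`, and this is attained by pulling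
up to a minimiser `s₀` of `Γ` on `[0, n]`, idling `T - n` times, and then pulling to the end.
-/

open Finset

lemma sum_range_sub_mul_sub (B : ℕ → ℝ) (T : ℕ) :
    ∑ t ∈ range T, ((T : ℝ) - t - 1) * (B (t + 1) - B t) = ∑ t ∈ range T, B t - T * B 0 := by
  induction T with
  | zero => simp
  | succ T ih =>
    have hsplit : ∀ t : ℕ, (((T + 1 : ℕ) : ℝ) - t - 1) * (B (t + 1) - B t)
        = ((T : ℝ) - t - 1) * (B (t + 1) - B t) + (B (t + 1) - B t) := fun t => by
      push_cast; ring
    rw [sum_congr rfl fun t _ => hsplit t, sum_add_distrib, sum_range_sub, sum_range_succ, ih,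
      sum_range_succ]
    push_cast
    ring

lemma ciInf_fin_le_of_le (G : ℕ → ℝ) {s n : ℕ} (h : s ≤ n) :
    ⨅ i : Fin (n + 1), G i ≤ G s :=
  ciInf_le (Set.finite_range _).bddBelow (⟨s, Nat.lt_succ_of_le h⟩ : Fin (n + 1))

namespace SingleArm

def pulls (b : ℕ → Bool) (k : ℕ) : ℕ := #{t ∈ range k | b t}

@[simp]
lemma pulls_zero (b : ℕ → Bool) : pulls b 0 = 0 := by simp [pulls]

lemma pulls_succ (b : ℕ → Bool) (k : ℕ) :
    pulls b (k + 1) = pulls b k + if b k then 1 else 0 := by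
  by_cases h : b k <;> simp [pulls, range_add_one, filter_insert, h]

lemma pulls_mono (b : ℕ → Bool) : Monotone (pulls b) := fun _ _ h =>
  card_le_card (filter_subset_filter _ (range_subset_range.2 h))

lemma pulls_le (b : ℕ → Bool) (k : ℕ) : pulls b k ≤ k :=
  (card_filter_le _ _).trans (card_range k).le

lemma pulls_congr {b b' : ℕ → Bool} {k : ℕ} (h : ∀ t < k, b t = b' t) :
    pulls b k = pulls b' k := by
  unfold pulls
  rw [filter_congr fun t ht => by rw [h t (mem_range.1 ht)]]

lemma card_filter_not_eq_sub_pulls (b : ℕ → Bool) (k : ℕ) :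
    #{t ∈ range k | ¬ b t} = k - pulls b k := by
  have := card_filter_add_card_filter_not (s := range k) (fun t => b t)
  rw [card_range] at this
  unfold pulls
  omega

lemma sum_filter_comp_pulls (b : ℕ → Bool) (F : ℕ → ℝ) (k : ℕ) :
    ∑ t ∈ range k with b t, F (pulls b t) = ∑ s ∈ range (pulls b k), F s := by
  induction k with
  | zero => simp
  | succ k ih =>
    rw [range_add_one, filter_insert, pulls_succ]
    by_cases h : b k
    · rw [if_pos h, if_pos h, sum_insert (by simp), ih, sum_range_succ, add_comm]
    · simpa [h] using ih

def ofFin {T : ℕ} (a : Fin T → Bool) (t : ℕ) : Bool := if h : t < T then a ⟨t, h⟩ else false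

lemma pullCount_eq_pulls_ofFin {T : ℕ} (a : Fin T → Bool) (k : ℕ) :
    pullCount a k = pulls (ofFin a) k := by
  unfold pullCount pulls
  rw [← card_image_of_injective _ Fin.val_injective]
  congr 1
  ext t
  by_cases ht : t < T <;> simp [ofFin, ht, Fin.exists_iff, and_comm]

variable (T : ℕ) (lam : ℝ) (m G : ℕ → ℝ)

def value (b : ℕ → Bool) : ℝ :=
  ∑ t ∈ range T, ((if b t then m (pulls b t) else lam)
    - ((T : ℝ) - t - 1) * (G (pulls b (t + 1)) - G (pulls b t)))

noncomputable def reducedValue (n : ℕ) : ℝ :=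
  T * G 0 + (T - n) * (lam - ⨅ s : Fin (n + 1), G s) + ∑ s ∈ range n, (m s - G s)

variable {T lam m G}

lemma value_congr {b b' : ℕ → Bool} (h : ∀ t < T, b t = b' t) :
    value T lam m G b = value T lam m G b' := by
  refine sum_congr rfl fun t ht => ?_
  have ht : t < T := mem_range.1 ht
  rw [h t ht, pulls_congr fun s hs => h s (by omega),
    pulls_congr fun s (hs : s < t + 1) => h s (by omega)]

variable (T lam m G)

lemma value_eq (b : ℕ → Bool) :
    value T lam m G b = T * G 0 + ∑ s ∈ range (pulls b T), (m s - G s)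
      + ∑ t ∈ range T with ¬ b t, (lam - G (pulls b t)) := by
  have hsplit : ∑ t ∈ range T, ((if b t then m (pulls b t) else lam) - G (pulls b t))
      = ∑ t ∈ range T with b t, (m (pulls b t) - G (pulls b t))
        + ∑ t ∈ range T with ¬ b t, (lam - G (pulls b t)) := by
    simp only [ite_sub, sum_ite]
  rw [sum_sub_distrib] at hsplit
  rw [value, sum_sub_distrib, sum_range_sub_mul_sub (fun t => G (pulls b t)), pulls_zero,
    ← sum_filter_comp_pulls b (fun s => m s - G s)]
  linarith

lemma value_le_reducedValue (b : ℕ → Bool) :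
    value T lam m G b ≤ reducedValue T lam m G (pulls b T) := by
  have hidle : ∑ t ∈ range T with ¬ b t, (lam - G (pulls b t))
      ≤ (T - pulls b T : ℝ) * (lam - ⨅ s : Fin (pulls b T + 1), G s) := by
    calc _ ≤ #{t ∈ range T | ¬ b t} • (lam - ⨅ s : Fin (pulls b T + 1), G s) :=
          sum_le_card_nsmul _ _ _ fun t ht => sub_le_sub_left (ciInf_fin_le_of_le G
            (pulls_mono b (mem_range.1 (mem_filter.1 ht).1).le)) lam
      _ = _ := by rw [card_filter_not_eq_sub_pulls, nsmul_eq_mul, Nat.cast_sub (pulls_le b T)]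
  rw [value_eq, reducedValue]
  linarith

def block (p q t : ℕ) : Bool := decide (t < p ∨ p + q ≤ t)

lemma pulls_block (p q k : ℕ) : pulls (block p q) k = min k p + (k - (p + q)) := by
  induction k with
  | zero => simp
  | succ k ih =>
    rw [pulls_succ, ih]
    by_cases h : k < p ∨ p + q ≤ k <;> simp [block, h] <;> omega

lemma value_block {p n : ℕ} (hp : p ≤ n) (hn : n ≤ T) :
    value T lam m G (block p (T - n))
      = T * G 0 + (T - n) * (lam - G p) + ∑ s ∈ range n, (m s - G s) := by
  have hpulls : pulls (block p (T - n)) T = n := by rw [pulls_block]; omega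
  have hidle : ∀ t ∈ {t ∈ range T | ¬ block p (T - n) t}, lam - G (pulls (block p (T - n)) t)
      = lam - G p := fun t ht => by
    simp only [mem_filter, mem_range, block, decide_eq_true_eq, not_or, not_lt] at ht
    rw [pulls_block, show min t p + (t - (p + (T - n))) = p by omega]
  rw [value_eq, sum_congr rfl hidle, sum_const, card_filter_not_eq_sub_pulls, hpulls,
    nsmul_eq_mul, Nat.cast_sub hn]
  ring

lemma exists_value_eq_reducedValue {n : ℕ} (hn : n ≤ T) :
    ∃ b, value T lam m G b = reducedValue T lam m G n := by
  obtain ⟨s₀, hs₀⟩ := exists_eq_ciInf_of_finite (f := fun s : Fin (n + 1) => G s)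
  refine ⟨block s₀ (T - n), ?_⟩
  rw [value_block T lam m G (Nat.lt_succ_iff.1 s₀.isLt) hn, reducedValue, ← hs₀]

lemma value_ofFin (a : Fin T → Bool) :
    value T lam m G (ofFin a) = ∑ t : Fin T, ((if a t then m (pullCount a t) else lam)
      - ((T : ℝ) - (t : ℕ) - 1) * (G (pullCount a ((t : ℕ) + 1)) - G (pullCount a t))) := by
  rw [value, ← Fin.sum_univ_eq_sum_range]
  refine sum_congr rfl fun t _ => ?_
  simp [pullCount_eq_pulls_ofFin, ofFin]

end SingleArm

open SingleArm in
/-- Reformulation of the single-armed inner problem: maximizing over binary sequences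
`(a_1,…,a_T)` the objective
`Σ_t [μ_{n_t−1}·𝟙{a_t=1} + λ·𝟙{a_t=0} − (T−t)(Γ_{n_t} − Γ_{n_{t−1}})]`
equals `max_{0≤n≤T} {T·Γ_0 + (T−n)(λ − min_{0≤s≤n} Γ_s) + Σ_{s=1}^n (μ_{s−1} − Γ_{s−1})}`. -/
theorem stmt_12 (T : ℕ) (lam : ℝ) (m G : ℕ → ℝ) :
    (⨆ a : Fin T → Bool,
      ∑ t : Fin T,
        ((if a t then m (pullCount a t) else lam)
          - ((T : ℝ) - (t : ℕ) - 1) * (G (pullCount a ((t : ℕ) + 1)) - G (pullCount a t))))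
    = ⨆ n : Fin (T + 1),
        ((T : ℝ) * G 0 + ((T : ℝ) - (n : ℕ)) * (lam - ⨅ s : Fin ((n : ℕ) + 1), G s)
          + ∑ s ∈ Finset.range (n : ℕ), (m s - G s)) := by
  simp only [← value_ofFin]
  change ⨆ a, value T lam m G (ofFin a) = ⨆ n : Fin (T + 1), reducedValue T lam m G n
  apply le_antisymm
  · refine ciSup_mono_of_forall_exists (Set.finite_range _).bddAbove fun a => ?_
    exact ⟨⟨pulls (ofFin a) T, Nat.lt_succ_of_le (pulls_le _ T)⟩, value_le_reducedValue _ _ _ _ _⟩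
  · refine ciSup_mono_of_forall_exists (Set.finite_range _).bddAbove fun n => ?_
    obtain ⟨b, hb⟩ := exists_value_eq_reducedValue T lam m G (Nat.lt_succ_iff.1 n.isLt)
    refine ⟨fun t => b t, le_of_eq ?_⟩
    rw [← hb]
    exact value_congr fun t ht => by simp [ofFin, ht]
end
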